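/- arXiv:1304.6153 — 2 statements merged into one kernel-verified Lean document; each statement's English description precedes it below -/
import Mathlib

section
/- Let G be a graph, S = {v₁, v₂, v₃} ⊆ V(G), and ℓ ≥ 2. Construct G' by adding, for each 1 ≤ i ≤ k−3 (k ≥ 4 fixed), a new vertex aⁱ and ℓ new vertices a₁ⁱ,…,a_ℓⁱ, with edges v₁aⱼⁱ and aⁱaⱼⁱ for all 1 ≤ j ≤ ℓ. Let S' = S ∪ {a¹,…,a^{k−3}}. Then G contains ℓ pairwise edge-disjoint Steiner trees connecting S if and only if G' contains ℓ pairwise edge-disjoint Steiner trees connecting S'. -/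
open SimpleGraph

def IsSteinerTree {V : Type*} (G : SimpleGraph V) (S : Set V) (T : G.Subgraph) : Prop :=
  S ⊆ T.verts ∧ T.coe.IsTree

def EdgeDisjointFamily {V : Type*} (G : SimpleGraph V) (S : Set V) {ℓ : ℕ}
    (F : Fin ℓ → G.Subgraph) : Prop :=
  (∀ i, IsSteinerTree G S (F i)) ∧
    ∀ i j, i ≠ j → (F i).edgeSet ∩ (F j).edgeSet = ∅

/-- The graph `G'` obtained from `G` by adding, for each `i : Fin (k-3)`, a vertex
`aⁱ = inr (i, none)` and `ℓ` vertices `aⱼⁱ = inr (i, some j)`, with edges `v₁aⱼⁱ` and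
`aⁱaⱼⁱ` for all `j`. -/
def fanExt {V : Type*} (G : SimpleGraph V) (v₁ : V) (k ℓ : ℕ) :
    SimpleGraph (V ⊕ (Fin (k - 3) × Option (Fin ℓ))) :=
  SimpleGraph.fromRel (fun x y =>
    (∃ p q : V, x = Sum.inl p ∧ y = Sum.inl q ∧ G.Adj p q) ∨
    (∃ (i : Fin (k - 3)) (j : Fin ℓ), x = Sum.inl v₁ ∧ y = Sum.inr (i, some j)) ∨
    (∃ (i : Fin (k - 3)) (j : Fin ℓ), x = Sum.inr (i, none) ∧ y = Sum.inr (i, some j)))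

/-!
A Steiner tree `T` of `G` with index `t` in the family lifts to `G'` by hanging the paths
`v₁ aₜⁱ aⁱ` off `v₁`: trees with different indices use different middle vertices `aₜⁱ`, so
edge-disjointness survives, and since `aⁱ` is a leaf and `aₜⁱ` has degree two, no cycle passes
through the new vertices. Conversely, a Steiner tree of `G'` restricted to `V` is still a tree:
`v₁` is the only vertex of `V` adjacent to an added vertex, so collapsing all added vertices onto
`v₁` turns walks of the tree into walks of its restriction.
-/

namespace SimpleGraph

variable {V W : Type*} {G : SimpleGraph V} {H : SimpleGraph W}

theorem Walk.IsCycle.exists_adj_ne_of_mem_support {u w : V} {c : G.Walk u u} (hc : c.IsCycle)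
    (hw : w ∈ c.support) :
    ∃ x ∈ c.support, ∃ y ∈ c.support, x ≠ y ∧ G.Adj w x ∧ G.Adj w y := by
  classical
  have hc' := hc.rotate hw
  refine ⟨_, (c.mem_support_rotate_iff w hw).mp ((c.rotate w hw).getVert_mem_support _),
    _, (c.mem_support_rotate_iff w hw).mp ((c.rotate w hw).getVert_mem_support _),
    hc'.snd_ne_penultimate, Walk.adj_snd hc'.not_nil, (Walk.adj_penultimate hc'.not_nil).symm⟩

theorem isAcyclic_of_isAcyclic_induce {s : Set V} (hs : (G.induce s).IsAcyclic)
    (hcycle : ∀ ⦃u : V⦄ (c : G.Walk u u), c.IsCycle → ∀ x ∈ c.support, x ∈ s) :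
    G.IsAcyclic := fun u c hc =>
  hs (c.induce s (hcycle c hc)) (Walk.IsCycle.of_map (by rwa [Walk.map_induce]))

theorem Reachable.map_of_eq_or_adj (f : V → W)
    (hf : ∀ ⦃x y : V⦄, G.Adj x y → f x = f y ∨ H.Adj (f x) (f y)) {x y : V}
    (h : G.Reachable x y) : H.Reachable (f x) (f y) := by
  rw [reachable_iff_reflTransGen] at h ⊢
  refine h.lift' f fun a b hab => ?_
  show Relation.ReflTransGen H.Adj (f a) (f b)
  rcases hf hab with heq | hadj
  · exact heq ▸ Relation.ReflTransGen.refl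
  · exact .single hadj

theorem Subgraph.edgeSet_comap_subset (f : G →g H) (K : H.Subgraph) :
    (K.comap f).edgeSet ⊆ Sym2.map f ⁻¹' K.edgeSet := by
  rintro e he
  induction e using Sym2.ind with | _ x y => exact he.2

end SimpleGraph

namespace fanExt

open Sum

variable {V : Type*} {G : SimpleGraph V} {v₁ : V} {k ℓ : ℕ}

theorem adj_inl_inl {p q : V} : (fanExt G v₁ k ℓ).Adj (inl p) (inl q) ↔ G.Adj p q := by
  simp only [fanExt, fromRel_adj]
  grind [G.adj_symm, G.ne_of_adj]

theorem eq_of_adj_inl_inr {p : V} {z : Fin (k - 3) × Option (Fin ℓ)}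
    (h : (fanExt G v₁ k ℓ).Adj (inl p) (inr z)) : p = v₁ := by
  simp only [fanExt, fromRel_adj] at h
  grind

theorem adj_inl_inr_some (i : Fin (k - 3)) (j : Fin ℓ) :
    (fanExt G v₁ k ℓ).Adj (inl v₁) (inr (i, some j)) := by
  simp only [fanExt, fromRel_adj]
  grind

theorem adj_inr_none_inr_some (i : Fin (k - 3)) (j : Fin ℓ) :
    (fanExt G v₁ k ℓ).Adj (inr (i, none)) (inr (i, some j)) := by
  simp only [fanExt, fromRel_adj]
  grind

variable (G v₁ k ℓ) in
def inlEmbedding : G ↪g fanExt G v₁ k ℓ where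
  toFun := inl
  inj' := inl_injective
  map_rel_iff' := adj_inl_inl

variable (v₁ k) in
def lift (T : G.Subgraph) (t : Fin ℓ) : (fanExt G v₁ k ℓ).Subgraph where
  verts := inl '' insert v₁ T.verts ∪ {x | ∃ i, x = inr (i, none) ∨ x = inr (i, some t)}
  Adj x y := (∃ p q, x = inl p ∧ y = inl q ∧ T.Adj p q) ∨
    ∃ i, s(x, y) = s(inl v₁, inr (i, some t)) ∨ s(x, y) = s(inr (i, none), inr (i, some t))
  adj_sub := by
    rintro x y (⟨p, q, rfl, rfl, h⟩ | ⟨i, h | h⟩)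
    · exact adj_inl_inl.mpr (T.adj_sub h)
    all_goals rcases Sym2.eq_iff.mp h with ⟨rfl, rfl⟩ | ⟨rfl, rfl⟩
    · exact adj_inl_inr_some i t
    · exact (adj_inl_inr_some i t).symm
    · exact adj_inr_none_inr_some i t
    · exact (adj_inr_none_inr_some i t).symm
  edge_vert := by
    rintro x y (⟨p, q, rfl, rfl, h⟩ | ⟨i, h | h⟩)
    · exact Or.inl ⟨p, Set.mem_insert_of_mem _ (T.edge_vert h), rfl⟩
    all_goals rcases Sym2.eq_iff.mp h with ⟨rfl, rfl⟩ | ⟨rfl, rfl⟩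
    · exact Or.inl ⟨v₁, Set.mem_insert _ _, rfl⟩
    · exact Or.inr ⟨i, Or.inr rfl⟩
    · exact Or.inr ⟨i, Or.inl rfl⟩
    · exact Or.inr ⟨i, Or.inr rfl⟩
  symm := by
    constructor
    rintro x y (⟨p, q, rfl, rfl, h⟩ | ⟨i, h⟩)
    · exact Or.inl ⟨q, p, rfl, rfl, h.symm⟩
    · exact Or.inr ⟨i, by rwa [Sym2.eq_swap]⟩

section Lift

variable {T : G.Subgraph} {t : Fin ℓ}

theorem lift_adj_inl_inl {p q : V} : (lift v₁ k T t).Adj (inl p) (inl q) ↔ T.Adj p q := by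
  simp [lift]

theorem eq_of_lift_adj_inr_none {i : Fin (k - 3)} {y : V ⊕ (Fin (k - 3) × Option (Fin ℓ))}
    (h : (lift v₁ k T t).Adj (inr (i, none)) y) : y = inr (i, some t) := by
  simp only [lift, Sym2.eq_iff] at h
  grind

theorem eq_or_eq_of_lift_adj_inr_some {i : Fin (k - 3)} {j : Fin ℓ}
    {y : V ⊕ (Fin (k - 3) × Option (Fin ℓ))} (h : (lift v₁ k T t).Adj (inr (i, some j)) y) :
    y = inl v₁ ∨ y = inr (i, none) := by
  simp only [lift, Sym2.eq_iff] at h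
  grind

variable (v₁ k) in
def liftEmbedding (T : G.Subgraph) (t : Fin ℓ) : T.coe ↪g (lift v₁ k T t).coe where
  toFun p := ⟨inl p, Or.inl ⟨p, Set.mem_insert_of_mem _ p.2, rfl⟩⟩
  inj' _ _ h := Subtype.ext (inl_injective (congrArg Subtype.val h))
  map_rel_iff' := lift_adj_inl_inl

theorem mem_range_liftEmbedding_of_mem_cycle (hv : v₁ ∈ T.verts)
    {u : (lift v₁ k T t).verts} {c : (lift v₁ k T t).coe.Walk u u} (hc : c.IsCycle)
    {w : (lift v₁ k T t).verts} (hw : w ∈ c.support) : w ∈ Set.range (liftEmbedding v₁ k T t) := by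
  have hnone : ∀ w ∈ c.support, ∀ i, w.1 ≠ inr (i, none) := by
    rintro ⟨_, _⟩ hw i rfl
    obtain ⟨x, -, y, -, hxy, hx, hy⟩ := hc.exists_adj_ne_of_mem_support hw
    exact hxy (Subtype.ext ((eq_of_lift_adj_inr_none hx).trans (eq_of_lift_adj_inr_none hy).symm))
  obtain ⟨p | ⟨i, _ | j⟩, hw'⟩ := w
  · have hp : p ∈ T.verts := by simpa [lift, Set.insert_eq_of_mem hv] using hw'
    exact ⟨⟨p, hp⟩, rfl⟩
  · exact absurd rfl (hnone _ hw i)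
  · obtain ⟨x, hxc, y, hyc, hxy, hx, hy⟩ := hc.exists_adj_ne_of_mem_support hw
    have hx' := (eq_or_eq_of_lift_adj_inr_some hx).resolve_right (hnone x hxc i)
    have hy' := (eq_or_eq_of_lift_adj_inr_some hy).resolve_right (hnone y hyc i)
    exact absurd (Subtype.ext (hx'.trans hy'.symm)) hxy

theorem lift_isTree (hv : v₁ ∈ T.verts) (hT : T.coe.IsTree) : (lift v₁ k T t).coe.IsTree := by
  let root := liftEmbedding v₁ k T t ⟨v₁, hv⟩
  have hmid : ∀ i, (lift v₁ k T t).coe.Reachable ⟨inr (i, some t), Or.inr ⟨i, Or.inr rfl⟩⟩ root :=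
    fun i => Adj.reachable (Or.inr ⟨i, Or.inl Sym2.eq_swap⟩)
  have hreach : ∀ x, (lift v₁ k T t).coe.Reachable x root := by
    rintro ⟨x, ⟨p, hp, rfl⟩ | ⟨i, rfl | rfl⟩⟩
    · rw [Set.insert_eq_of_mem hv] at hp
      exact (hT.connected.preconnected ⟨p, hp⟩ ⟨v₁, hv⟩).map (liftEmbedding v₁ k T t).toHom
    · exact (Adj.reachable (Or.inr ⟨i, Or.inr rfl⟩)).trans (hmid i)
    · exact hmid i
  refine ⟨@Connected.mk _ _ (fun x y => (hreach x).trans (hreach y).symm) ⟨root⟩, ?_⟩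
  exact isAcyclic_of_isAcyclic_induce
    ((liftEmbedding v₁ k T t).isoInduceRange.isAcyclic_iff.mp hT.isAcyclic)
    fun _ _ hc _ hw => mem_range_liftEmbedding_of_mem_cycle hv hc hw

theorem lift_edgeSet_inter_subset {T₁ T₂ : G.Subgraph} {a b : Fin ℓ} (hab : a ≠ b) :
    (lift v₁ k T₁ a).edgeSet ∩ (lift v₁ k T₂ b).edgeSet ⊆
      Sym2.map inl '' (T₁.edgeSet ∩ T₂.edgeSet) := by
  rintro e ⟨h₁, h₂⟩
  induction e using Sym2.ind with | _ x y => ?_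
  rw [Subgraph.mem_edgeSet] at h₁
  rcases h₁ with ⟨p, q, rfl, rfl, hpq⟩ | ⟨i, h | h⟩
  · exact ⟨s(p, q), ⟨hpq, lift_adj_inl_inl.mp h₂⟩, rfl⟩
  all_goals
    rw [h, Subgraph.mem_edgeSet] at h₂
    exact absurd (by simpa [lift] using h₂) hab

end Lift

section Restriction

variable {T : (fanExt G v₁ k ℓ).Subgraph}

def retraction (hv : inl v₁ ∈ T.verts) :
    T.verts → (T.comap (inlEmbedding G v₁ k ℓ).toHom).verts
  | ⟨inl p, hp⟩ => ⟨p, hp⟩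
  | ⟨inr _, _⟩ => ⟨v₁, hv⟩

theorem comap_inlEmbedding_isTree (hv : inl v₁ ∈ T.verts) (hT : T.coe.IsTree) :
    (T.comap (inlEmbedding G v₁ k ℓ).toHom).coe.IsTree := by
  have hretract : ∀ ⦃x y⦄, T.coe.Adj x y → retraction hv x = retraction hv y ∨
      (T.comap (inlEmbedding G v₁ k ℓ).toHom).coe.Adj (retraction hv x) (retraction hv y) := by
    rintro ⟨p | z, hx⟩ ⟨q | z', hy⟩ h
    · exact Or.inr ⟨adj_inl_inl.mp (T.adj_sub h), h⟩
    · obtain rfl := eq_of_adj_inl_inr (T.adj_sub h)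
      exact Or.inl rfl
    · obtain rfl := eq_of_adj_inl_inr (T.adj_sub h).symm
      exact Or.inl rfl
    · exact Or.inl rfl
  refine ⟨@Connected.mk _ _ (fun ⟨p, hp⟩ ⟨q, hq⟩ =>
    (hT.connected.preconnected ⟨inl p, hp⟩ ⟨inl q, hq⟩).map_of_eq_or_adj _ hretract) ⟨⟨v₁, hv⟩⟩, ?_⟩
  exact hT.isAcyclic.comap ⟨fun x => ⟨inl x.1, x.2⟩, fun h => h.2⟩
    fun _ _ h => Subtype.ext (inl_injective (congrArg Subtype.val h))

end Restriction

end fanExt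

open fanExt

theorem stmt5_general {V : Type*} (G : SimpleGraph V) (v₁ v₂ v₃ : V) (k ℓ : ℕ) :
    (∃ F : Fin ℓ → G.Subgraph, EdgeDisjointFamily G {v₁, v₂, v₃} F) ↔
    (∃ F : Fin ℓ → (fanExt G v₁ k ℓ).Subgraph,
        EdgeDisjointFamily (fanExt G v₁ k ℓ)
          ((Sum.inl '' {v₁, v₂, v₃}) ∪
            {x | ∃ i : Fin (k - 3), x = Sum.inr (i, none)}) F) := by
  constructor
  · rintro ⟨F, hF, hdis⟩
    have hv : ∀ t, v₁ ∈ (F t).verts := fun t => (hF t).1 (by simp)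
    refine ⟨fun t => lift v₁ k (F t) t, fun t => ⟨?_, lift_isTree (hv t) (hF t).2⟩,
      fun a b hab => ?_⟩
    · rintro x (⟨p, hp, rfl⟩ | ⟨i, rfl⟩)
      · exact Or.inl ⟨p, Set.mem_insert_of_mem _ ((hF t).1 hp), rfl⟩
      · exact Or.inr ⟨i, Or.inl rfl⟩
    · refine Set.subset_empty_iff.mp ((lift_edgeSet_inter_subset hab).trans ?_)
      rw [hdis a b hab, Set.image_empty]
  · rintro ⟨F, hF, hdis⟩
    have hv : ∀ t, Sum.inl v₁ ∈ (F t).verts := fun t => (hF t).1 (Or.inl ⟨v₁, by simp, rfl⟩)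
    refine ⟨fun t => (F t).comap (inlEmbedding G v₁ k ℓ).toHom,
      fun t => ⟨fun x hx => (hF t).1 (Or.inl ⟨x, hx, rfl⟩),
        comap_inlEmbedding_isTree (hv t) (hF t).2⟩,
      fun a b hab => Set.subset_empty_iff.mp fun e he => ?_⟩
    have he' : Sym2.map Sum.inl e ∈ (F a).edgeSet ∩ (F b).edgeSet :=
      ⟨Subgraph.edgeSet_comap_subset _ _ he.1, Subgraph.edgeSet_comap_subset _ _ he.2⟩
    rwa [hdis a b hab] at he'

/-- `G` contains `ℓ` pairwise edge-disjoint Steiner trees connecting `S = {v₁, v₂, v₃}`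
iff `G'` contains `ℓ` pairwise edge-disjoint Steiner trees connecting
`S' = S ∪ {a¹, …, a^{k-3}}`. -/
theorem stmt5 {V : Type*} (G : SimpleGraph V) (v₁ v₂ v₃ : V)
    (h12 : v₁ ≠ v₂) (h13 : v₁ ≠ v₃) (h23 : v₂ ≠ v₃)
    (k ℓ : ℕ) (hk : 4 ≤ k) (hl : 2 ≤ ℓ) :
    (∃ F : Fin ℓ → G.Subgraph, EdgeDisjointFamily G {v₁, v₂, v₃} F) ↔
    (∃ F : Fin ℓ → (fanExt G v₁ k ℓ).Subgraph,
        EdgeDisjointFamily (fanExt G v₁ k ℓ)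
          ((Sum.inl '' {v₁, v₂, v₃}) ∪
            {x | ∃ i : Fin (k - 3), x = Sum.inr (i, none)}) F) :=
  stmt5_general G v₁ v₂ v₃ k ℓ
end

section
/- Let U, V, W be finite sets with |U| = |V| = |W| = n and let T = {T₁,…,T_m} ⊆ U × V × W. Construct the tripartite graph G on 3n + 18m vertices as in the gadget construction (each triple Tᵢ = (uᵢ,vᵢ,wᵢ) gets 18 new vertices t_{i₁},…,t_{i₁₈} and 26 gadget edges connecting them to uᵢ, vᵢ, wᵢ), with parts Ū, V̄, W̄ each of size q = n + 6m. Then G admits a partition of its vertex set into q triples, each containing one vertex from each part and inducing a connected subgraph, if and only if T contains a perfect 3-dimensional matching, i.e., a subset M ⊆ T with |M| = n whose triples are pairwise disjoint in each coordinate. -/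
open SimpleGraph

/-- The 20 internal edges of each 18-vertex gadget (vertices `t₁, …, t₁₈` are indexed
`0, …, 17`): three branches of six vertices each (for the `u`-, `v`- and `w`-terminal,
with six internal edges per branch) together with the two central edges
`t₆t₁₂` and `t₁₂t₁₈`, i.e. `(5,11)` and `(11,17)`. -/
def gadgetPairs : List (Fin 18 × Fin 18) :=
  [(0, 2), (1, 2), (2, 4), (3, 4), (4, 5), (1, 3),
   (6, 8), (7, 8), (8, 10), (9, 10), (10, 11), (7, 9),
   (12, 14), (13, 14), (14, 16), (15, 16), (16, 17), (13, 15),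
   (5, 11), (11, 17)]

/-- The vertex set of the gadget graph: the original elements of `U ⊕ V ⊕ W` together with
the 18 gadget vertices for each of the `m` triples. -/
abbrev GadgetV (α β γ : Type*) (m : ℕ) : Type _ := (α ⊕ β ⊕ γ) ⊕ (Fin m × Fin 18)

/-- The tripartite gadget graph built from a 3-dimensional matching instance
`T : Fin m → α × β × γ`: each triple `Tᵢ = (uᵢ, vᵢ, wᵢ)` receives 18 new vertices and
26 edges (six terminal edges `uᵢtᵢ₁, uᵢtᵢ₂, vᵢtᵢ₇, vᵢtᵢ₈, wᵢtᵢ₁₃, wᵢtᵢ₁₄` and 20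
internal gadget edges). -/
def gadgetGraph {α β γ : Type*} (m : ℕ) (T : Fin m → α × β × γ) :
    SimpleGraph (GadgetV α β γ m) :=
  SimpleGraph.fromRel (fun x y => ∃ i : Fin m,
    (x = Sum.inl (Sum.inl (T i).1) ∧ (y = Sum.inr (i, 0) ∨ y = Sum.inr (i, 1))) ∨
    (x = Sum.inl (Sum.inr (Sum.inl (T i).2.1)) ∧
      (y = Sum.inr (i, 6) ∨ y = Sum.inr (i, 7))) ∨
    (x = Sum.inl (Sum.inr (Sum.inr (T i).2.2)) ∧
      (y = Sum.inr (i, 12) ∨ y = Sum.inr (i, 13))) ∨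
    (∃ p ∈ gadgetPairs, x = Sum.inr (i, p.1) ∧ y = Sum.inr (i, p.2)))

/-- The part `Ū` of the tripartition: `U` together with the gadget vertices
`t₃, t₆, t₇, t₁₀, t₁₃, t₁₆` of every gadget. -/
def Ubar (α β γ : Type*) (m : ℕ) : Set (GadgetV α β γ m) :=
  {x | (∃ u : α, x = Sum.inl (Sum.inl u)) ∨
    ∃ i : Fin m, ∃ j ∈ ({2, 5, 6, 9, 12, 15} : Set (Fin 18)), x = Sum.inr (i, j)}

/-- The part `V̄` of the tripartition: `V` together with the gadget vertices
`t₁, t₄, t₉, t₁₂, t₁₄, t₁₇` of every gadget. -/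
def Vbar (α β γ : Type*) (m : ℕ) : Set (GadgetV α β γ m) :=
  {x | (∃ v : β, x = Sum.inl (Sum.inr (Sum.inl v))) ∨
    ∃ i : Fin m, ∃ j ∈ ({0, 3, 8, 11, 13, 16} : Set (Fin 18)), x = Sum.inr (i, j)}

/-- The part `W̄` of the tripartition: `W` together with the gadget vertices
`t₂, t₅, t₈, t₁₁, t₁₅, t₁₈` of every gadget. -/
def Wbar (α β γ : Type*) (m : ℕ) : Set (GadgetV α β γ m) :=
  {x | (∃ w : γ, x = Sum.inl (Sum.inr (Sum.inr w))) ∨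
    ∃ i : Fin m, ∃ j ∈ ({1, 4, 7, 10, 14, 17} : Set (Fin 18)), x = Sum.inr (i, j)}

set_option maxRecDepth 4000

namespace Gadget

variable {α β γ : Type*} {m : ℕ} {T : Fin m → α × β × γ}

/-- abbreviation for gadget vertex -/
abbrev g (i : Fin m) (j : Fin 18) : GadgetV α β γ m := Sum.inr (i, j)

abbrev tU (u : α) : GadgetV α β γ m := Sum.inl (Sum.inl u)
abbrev tV (v : β) : GadgetV α β γ m := Sum.inl (Sum.inr (Sum.inl v))
abbrev tW (w : γ) : GadgetV α β γ m := Sum.inl (Sum.inr (Sum.inr w))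

def pairAdj (j l : Fin 18) : Prop :=
  (j, l) ∈ gadgetPairs ∨ (l, j) ∈ gadgetPairs

instance (j l : Fin 18) : Decidable (pairAdj j l) := by
  unfold pairAdj; infer_instance

lemma pairAdj_ne {j l : Fin 18} (h : pairAdj j l) : j ≠ l := by
  revert h
  have : ∀ q : Fin 18 × Fin 18, pairAdj q.1 q.2 → q.1 ≠ q.2 := by decide
  exact fun h => this (j, l) h

lemma adj_rr {i k : Fin m} {j l : Fin 18} :
    (gadgetGraph m T).Adj (g i j) (g k l) ↔ i = k ∧ pairAdj j l := by
  constructor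
  · rintro ⟨hne, h | h⟩ <;>
    · obtain ⟨i', h⟩ := h
      rcases h with ⟨h, -⟩ | ⟨h, -⟩ | ⟨h, -⟩ | ⟨p, hp, h1, h2⟩ <;>
        first
        | (exact absurd h (by simp [g]))
        | (simp only [g, Sum.inr.injEq, Prod.mk.injEq] at h1 h2
           obtain ⟨rfl, rfl⟩ := h1; obtain ⟨rfl, rfl⟩ := h2
           first
           | exact ⟨rfl, Or.inl hp⟩
           | exact ⟨rfl, Or.inr hp⟩)
  · rintro ⟨rfl, hp | hp⟩
    · exact ⟨by simp [g, Prod.ext_iff, pairAdj_ne (Or.inl hp)],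
        Or.inl ⟨i, Or.inr <| Or.inr <| Or.inr ⟨(j, l), hp, rfl, rfl⟩⟩⟩
    · exact ⟨by simp [g, Prod.ext_iff, pairAdj_ne (Or.inr hp)],
        Or.inr ⟨i, Or.inr <| Or.inr <| Or.inr ⟨(l, j), hp, rfl, rfl⟩⟩⟩

end Gadget
namespace Gadget

variable {α β γ : Type*} {m : ℕ} {T : Fin m → α × β × γ}

lemma not_adj_ll {x y : α ⊕ β ⊕ γ} :
    ¬ (gadgetGraph m T).Adj (Sum.inl x) (Sum.inl y) := by
  rintro ⟨hne, h | h⟩ <;>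
  · obtain ⟨i, h⟩ := h
    rcases h with ⟨-, h2 | h2⟩ | ⟨-, h2 | h2⟩ | ⟨-, h2 | h2⟩ | ⟨p, -, h2, -⟩ <;>
      simp at h2

lemma adj_ur {u : α} {k : Fin m} {l : Fin 18} :
    (gadgetGraph m T).Adj (tU u) (g k l) ↔ (T k).1 = u ∧ (l = 0 ∨ l = 1) := by
  constructor
  · rintro ⟨-, h | h⟩ <;>
    · obtain ⟨i, h⟩ := h
      rcases h with ⟨h1, h2 | h2⟩ | ⟨h1, h2 | h2⟩ | ⟨h1, h2 | h2⟩ | ⟨p, hp, h1, h2⟩ <;>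
        simp only [tU, g, Sum.inl.injEq, Sum.inr.injEq, Prod.mk.injEq, reduceCtorEq,
          false_and, and_false] at h1 h2 <;>
      · obtain ⟨rfl, rfl⟩ := h2
        exact ⟨h1.symm, by simp⟩
  · rintro ⟨hu, rfl | rfl⟩
    · exact ⟨by simp [tU, g], Or.inl ⟨k, Or.inl ⟨by rw [hu], Or.inl rfl⟩⟩⟩
    · exact ⟨by simp [tU, g], Or.inl ⟨k, Or.inl ⟨by rw [hu], Or.inr rfl⟩⟩⟩

lemma adj_vr {v : β} {k : Fin m} {l : Fin 18} :
    (gadgetGraph m T).Adj (tV v) (g k l) ↔ (T k).2.1 = v ∧ (l = 6 ∨ l = 7) := by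
  constructor
  · rintro ⟨-, h | h⟩ <;>
    · obtain ⟨i, h⟩ := h
      rcases h with ⟨h1, h2 | h2⟩ | ⟨h1, h2 | h2⟩ | ⟨h1, h2 | h2⟩ | ⟨p, hp, h1, h2⟩ <;>
        simp only [tV, g, Sum.inl.injEq, Sum.inr.injEq, Prod.mk.injEq, reduceCtorEq,
          false_and, and_false] at h1 h2 <;>
      · obtain ⟨rfl, rfl⟩ := h2
        exact ⟨h1.symm, by simp⟩
  · rintro ⟨hv, rfl | rfl⟩
    · exact ⟨by simp [tV, g], Or.inl ⟨k, Or.inr <| Or.inl ⟨by rw [hv], Or.inl rfl⟩⟩⟩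
    · exact ⟨by simp [tV, g], Or.inl ⟨k, Or.inr <| Or.inl ⟨by rw [hv], Or.inr rfl⟩⟩⟩

lemma adj_wr {w : γ} {k : Fin m} {l : Fin 18} :
    (gadgetGraph m T).Adj (tW w) (g k l) ↔ (T k).2.2 = w ∧ (l = 12 ∨ l = 13) := by
  constructor
  · rintro ⟨-, h | h⟩ <;>
    · obtain ⟨i, h⟩ := h
      rcases h with ⟨h1, h2 | h2⟩ | ⟨h1, h2 | h2⟩ | ⟨h1, h2 | h2⟩ | ⟨p, hp, h1, h2⟩ <;>
        simp only [tW, g, Sum.inl.injEq, Sum.inr.injEq, Prod.mk.injEq, reduceCtorEq,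
          false_and, and_false] at h1 h2 <;>
      · obtain ⟨rfl, rfl⟩ := h2
        exact ⟨h1.symm, by simp⟩
  · rintro ⟨hw, rfl | rfl⟩
    · exact ⟨by simp [tW, g], Or.inl ⟨k, Or.inr <| Or.inr <| Or.inl ⟨by rw [hw], Or.inl rfl⟩⟩⟩
    · exact ⟨by simp [tW, g], Or.inl ⟨k, Or.inr <| Or.inr <| Or.inl ⟨by rw [hw], Or.inr rfl⟩⟩⟩

end Gadget
namespace Gadget

variable {α β γ : Type*} {m : ℕ} {T : Fin m → α × β × γ}

lemma mem_U_g {i : Fin m} {j : Fin 18} :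
    (g i j : GadgetV α β γ m) ∈ Ubar α β γ m ↔
      j = 2 ∨ j = 5 ∨ j = 6 ∨ j = 9 ∨ j = 12 ∨ j = 15 := by
  constructor
  · rintro (⟨u, h⟩ | ⟨i', j', hj', h⟩)
    · simp [g] at h
    · simp only [g, Sum.inr.injEq, Prod.mk.injEq] at h
      obtain ⟨-, rfl⟩ := h
      simpa using hj'
  · intro hj
    exact Or.inr ⟨i, j, by simpa using hj, rfl⟩

lemma mem_V_g {i : Fin m} {j : Fin 18} :
    (g i j : GadgetV α β γ m) ∈ Vbar α β γ m ↔
      j = 0 ∨ j = 3 ∨ j = 8 ∨ j = 11 ∨ j = 13 ∨ j = 16 := by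
  constructor
  · rintro (⟨v, h⟩ | ⟨i', j', hj', h⟩)
    · simp [g] at h
    · simp only [g, Sum.inr.injEq, Prod.mk.injEq] at h
      obtain ⟨-, rfl⟩ := h
      simpa using hj'
  · intro hj
    exact Or.inr ⟨i, j, by simpa using hj, rfl⟩

lemma mem_W_g {i : Fin m} {j : Fin 18} :
    (g i j : GadgetV α β γ m) ∈ Wbar α β γ m ↔
      j = 1 ∨ j = 4 ∨ j = 7 ∨ j = 10 ∨ j = 14 ∨ j = 17 := by
  constructor
  · rintro (⟨w, h⟩ | ⟨i', j', hj', h⟩)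
    · simp [g] at h
    · simp only [g, Sum.inr.injEq, Prod.mk.injEq] at h
      obtain ⟨-, rfl⟩ := h
      simpa using hj'
  · intro hj
    exact Or.inr ⟨i, j, by simpa using hj, rfl⟩

lemma mem_U_tU {u : α} : (tU u : GadgetV α β γ m) ∈ Ubar α β γ m := Or.inl ⟨u, rfl⟩
lemma mem_V_tV {v : β} : (tV v : GadgetV α β γ m) ∈ Vbar α β γ m := Or.inl ⟨v, rfl⟩
lemma mem_W_tW {w : γ} : (tW w : GadgetV α β γ m) ∈ Wbar α β γ m := Or.inl ⟨w, rfl⟩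

/-- shape of an element of Ubar -/
lemma U_shape {x : GadgetV α β γ m} (h : x ∈ Ubar α β γ m) :
    (∃ u : α, x = tU u) ∨ ∃ i j, x = g i j ∧
      (j = 2 ∨ j = 5 ∨ j = 6 ∨ j = 9 ∨ j = 12 ∨ j = 15) := by
  rcases h with ⟨u, rfl⟩ | ⟨i, j, hj, rfl⟩
  · exact Or.inl ⟨u, rfl⟩
  · exact Or.inr ⟨i, j, rfl, by simpa using hj⟩

lemma V_shape {x : GadgetV α β γ m} (h : x ∈ Vbar α β γ m) :
    (∃ v : β, x = tV v) ∨ ∃ i j, x = g i j ∧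
      (j = 0 ∨ j = 3 ∨ j = 8 ∨ j = 11 ∨ j = 13 ∨ j = 16) := by
  rcases h with ⟨v, rfl⟩ | ⟨i, j, hj, rfl⟩
  · exact Or.inl ⟨v, rfl⟩
  · exact Or.inr ⟨i, j, rfl, by simpa using hj⟩

lemma W_shape {x : GadgetV α β γ m} (h : x ∈ Wbar α β γ m) :
    (∃ w : γ, x = tW w) ∨ ∃ i j, x = g i j ∧
      (j = 1 ∨ j = 4 ∨ j = 7 ∨ j = 10 ∨ j = 14 ∨ j = 17) := by
  rcases h with ⟨w, rfl⟩ | ⟨i, j, hj, rfl⟩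
  · exact Or.inl ⟨w, rfl⟩
  · exact Or.inr ⟨i, j, rfl, by simpa using hj⟩

lemma U_V_disj {x : GadgetV α β γ m} (hU : x ∈ Ubar α β γ m) (hV : x ∈ Vbar α β γ m) :
    False := by
  rcases U_shape hU with ⟨u, rfl⟩ | ⟨i, j, rfl, hj⟩
  · rcases V_shape hV with ⟨v, h⟩ | ⟨i, j, h, -⟩ <;> simp [tU, tV, g] at h
  · rcases V_shape hV with ⟨v, h⟩ | ⟨i', j', h, hj'⟩
    · simp [tV, g] at h
    · simp only [g, Sum.inr.injEq, Prod.mk.injEq] at h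
      obtain ⟨-, rfl⟩ := h
      rcases hj with rfl|rfl|rfl|rfl|rfl|rfl <;> simp at hj'

lemma U_W_disj {x : GadgetV α β γ m} (hU : x ∈ Ubar α β γ m) (hW : x ∈ Wbar α β γ m) :
    False := by
  rcases U_shape hU with ⟨u, rfl⟩ | ⟨i, j, rfl, hj⟩
  · rcases W_shape hW with ⟨w, h⟩ | ⟨i, j, h, -⟩ <;> simp [tU, tW, g] at h
  · rcases W_shape hW with ⟨w, h⟩ | ⟨i', j', h, hj'⟩
    · simp [tW, g] at h
    · simp only [g, Sum.inr.injEq, Prod.mk.injEq] at h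
      obtain ⟨-, rfl⟩ := h
      rcases hj with rfl|rfl|rfl|rfl|rfl|rfl <;> simp at hj'

lemma V_W_disj {x : GadgetV α β γ m} (hV : x ∈ Vbar α β γ m) (hW : x ∈ Wbar α β γ m) :
    False := by
  rcases V_shape hV with ⟨v, rfl⟩ | ⟨i, j, rfl, hj⟩
  · rcases W_shape hW with ⟨w, h⟩ | ⟨i, j, h, -⟩ <;> simp [tV, tW, g] at h
  · rcases W_shape hW with ⟨w, h⟩ | ⟨i', j', h, hj'⟩
    · simp [tW, g] at h
    · simp only [g, Sum.inr.injEq, Prod.mk.injEq] at h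
      obtain ⟨-, rfl⟩ := h
      rcases hj with rfl|rfl|rfl|rfl|rfl|rfl <;> simp at hj'

end Gadget
namespace Gadget

variable {V : Type*} {G : SimpleGraph V}

open SimpleGraph

/-- a 3-set with a center adjacent to both others induces a connected subgraph -/
lemma conn3 {a b c : V} (h1 : G.Adj a b) (h2 : G.Adj a c) :
    (G.induce {a, b, c}).Connected := by
  have ha : a ∈ ({a, b, c} : Set V) := by simp
  have hb : b ∈ ({a, b, c} : Set V) := by simp
  have hc : c ∈ ({a, b, c} : Set V) := by simp
  rw [SimpleGraph.connected_iff]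
  refine ⟨?_, ⟨⟨a, ha⟩⟩⟩
  have key : ∀ x : ({a, b, c} : Set V),
      (G.induce {a, b, c}).Reachable x ⟨a, ha⟩ := by
    rintro ⟨x, hx⟩
    rcases hx with rfl | rfl | rfl
    · rfl
    · exact (SimpleGraph.Adj.reachable (by exact h1.symm : G.Adj _ _))
    · exact (SimpleGraph.Adj.reachable (by exact h2.symm : G.Adj _ _))
  intro x y
  exact (key x).trans (key y).symm

/-- in a connected induced 3-set, every vertex has a neighbour inside the set -/
lemma conn3_adj {a b c : V} (hab : a ≠ b) (hac : a ≠ c)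
    (h : (G.induce {a, b, c}).Connected) : G.Adj a b ∨ G.Adj a c := by
  have ha : a ∈ ({a, b, c} : Set V) := by simp
  have hb : b ∈ ({a, b, c} : Set V) := by simp
  have hr := h.preconnected ⟨a, ha⟩ ⟨b, hb⟩
  obtain ⟨w⟩ := hr
  cases w with
  | nil => exact absurd rfl hab
  | cons h' p =>
    rename_i x
    obtain ⟨x, hx⟩ := x
    have hadj : G.Adj a x := h'
    rcases hx with rfl | rfl | rfl
    · exact absurd hadj (G.irrefl)
    · exact Or.inl hadj
    · exact Or.inr hadj

/-- two of the three pairs of a connected transversal triple are adjacent -/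
lemma twoEdges {a b c : V} (hab : a ≠ b) (hac : a ≠ c) (hbc : b ≠ c)
    (h : (G.induce {a, b, c}).Connected) :
    (G.Adj a b ∧ G.Adj b c) ∨ (G.Adj a b ∧ G.Adj a c) ∨ (G.Adj a c ∧ G.Adj b c) := by
  have h1 := conn3_adj hab hac h
  have h2 : G.Adj b a ∨ G.Adj b c := by
    have : ({a, b, c} : Set V) = {b, a, c} := by
      ext x; simp; tauto
    exact conn3_adj hab.symm hbc (this ▸ h)
  have h3 : G.Adj c a ∨ G.Adj c b := by
    have : ({a, b, c} : Set V) = {c, a, b} := by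
      ext x; simp; tauto
    exact conn3_adj hac.symm hbc.symm (this ▸ h)
  rcases h1 with h1 | h1 <;> rcases h2 with h2 | h2 <;> rcases h3 with h3 | h3 <;>
    first
    | exact Or.inl ⟨h1, h3.symm⟩
    | exact Or.inl ⟨h1, h2⟩
    | exact Or.inr (Or.inl ⟨h1, h3.symm⟩)
    | exact Or.inr (Or.inl ⟨h2.symm, h1⟩)
    | exact Or.inr (Or.inr ⟨h1, h2⟩)
    | exact Or.inr (Or.inr ⟨h1, h3.symm⟩)
    | exact Or.inr (Or.inr ⟨h3.symm, h2⟩)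

end Gadget
namespace Gadget

variable {α β γ : Type*} {m : ℕ} {T : Fin m → α × β × γ}

lemma adjU_decode {x : GadgetV α β γ m} (hx : x ∈ Ubar α β γ m) {i : Fin m} {k : Fin 18}
    (h : (gadgetGraph m T).Adj x (g i k)) :
    (x = tU (T i).1 ∧ (k = 0 ∨ k = 1)) ∨
      (∃ j, x = g i j ∧ pairAdj j k ∧ (j = 2 ∨ j = 5 ∨ j = 6 ∨ j = 9 ∨ j = 12 ∨ j = 15)) := by
  rcases U_shape hx with ⟨u, rfl⟩ | ⟨i', j, rfl, hj⟩
  · obtain ⟨h1, h2⟩ := adj_ur.mp h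
    exact Or.inl ⟨by rw [h1], h2⟩
  · obtain ⟨rfl, hpa⟩ := adj_rr.mp h
    exact Or.inr ⟨j, rfl, hpa, hj⟩

lemma adjV_decode {x : GadgetV α β γ m} (hx : x ∈ Vbar α β γ m) {i : Fin m} {k : Fin 18}
    (h : (gadgetGraph m T).Adj x (g i k)) :
    (x = tV (T i).2.1 ∧ (k = 6 ∨ k = 7)) ∨
      (∃ j, x = g i j ∧ pairAdj j k ∧ (j = 0 ∨ j = 3 ∨ j = 8 ∨ j = 11 ∨ j = 13 ∨ j = 16)) := by
  rcases V_shape hx with ⟨v, rfl⟩ | ⟨i', j, rfl, hj⟩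
  · obtain ⟨h1, h2⟩ := adj_vr.mp h
    exact Or.inl ⟨by rw [h1], h2⟩
  · obtain ⟨rfl, hpa⟩ := adj_rr.mp h
    exact Or.inr ⟨j, rfl, hpa, hj⟩

lemma adjW_decode {x : GadgetV α β γ m} (hx : x ∈ Wbar α β γ m) {i : Fin m} {k : Fin 18}
    (h : (gadgetGraph m T).Adj x (g i k)) :
    (x = tW (T i).2.2 ∧ (k = 12 ∨ k = 13)) ∨
      (∃ j, x = g i j ∧ pairAdj j k ∧ (j = 1 ∨ j = 4 ∨ j = 7 ∨ j = 10 ∨ j = 14 ∨ j = 17)) := by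
  rcases W_shape hx with ⟨w, rfl⟩ | ⟨i', j, rfl, hj⟩
  · obtain ⟨h1, h2⟩ := adj_wr.mp h
    exact Or.inl ⟨by rw [h1], h2⟩
  · obtain ⟨rfl, hpa⟩ := adj_rr.mp h
    exact Or.inr ⟨j, rfl, hpa, hj⟩

lemma adjV_tU {u : α} {x : GadgetV α β γ m} (hx : x ∈ Vbar α β γ m)
    (h : (gadgetGraph m T).Adj x (tU u)) : ∃ j, (T j).1 = u ∧ x = g j 0 := by
  rcases V_shape hx with ⟨v, rfl⟩ | ⟨i, j, rfl, hj⟩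
  · exact absurd h not_adj_ll
  · obtain ⟨h1, h2⟩ := adj_ur.mp h.symm
    refine ⟨i, h1, ?_⟩
    rcases h2 with rfl | rfl
    · rfl
    · rcases hj with h|h|h|h|h|h <;> simp at h

lemma adjW_tU {u : α} {x : GadgetV α β γ m} (hx : x ∈ Wbar α β γ m)
    (h : (gadgetGraph m T).Adj x (tU u)) : ∃ j, (T j).1 = u ∧ x = g j 1 := by
  rcases W_shape hx with ⟨w, rfl⟩ | ⟨i, j, rfl, hj⟩
  · exact absurd h not_adj_ll
  · obtain ⟨h1, h2⟩ := adj_ur.mp h.symm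
    refine ⟨i, h1, ?_⟩
    rcases h2 with rfl | rfl
    · rcases hj with h|h|h|h|h|h <;> simp at h
    · rfl

lemma adjU_tV {v : β} {x : GadgetV α β γ m} (hx : x ∈ Ubar α β γ m)
    (h : (gadgetGraph m T).Adj x (tV v)) : ∃ j, (T j).2.1 = v ∧ x = g j 6 := by
  rcases U_shape hx with ⟨u, rfl⟩ | ⟨i, j, rfl, hj⟩
  · exact absurd h not_adj_ll
  · obtain ⟨h1, h2⟩ := adj_vr.mp h.symm
    refine ⟨i, h1, ?_⟩
    rcases h2 with rfl | rfl
    · rfl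
    · rcases hj with h|h|h|h|h|h <;> simp at h

lemma adjW_tV {v : β} {x : GadgetV α β γ m} (hx : x ∈ Wbar α β γ m)
    (h : (gadgetGraph m T).Adj x (tV v)) : ∃ j, (T j).2.1 = v ∧ x = g j 7 := by
  rcases W_shape hx with ⟨w, rfl⟩ | ⟨i, j, rfl, hj⟩
  · exact absurd h not_adj_ll
  · obtain ⟨h1, h2⟩ := adj_vr.mp h.symm
    refine ⟨i, h1, ?_⟩
    rcases h2 with rfl | rfl
    · rcases hj with h|h|h|h|h|h <;> simp at h
    · rfl

lemma adjU_tW {w : γ} {x : GadgetV α β γ m} (hx : x ∈ Ubar α β γ m)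
    (h : (gadgetGraph m T).Adj x (tW w)) : ∃ j, (T j).2.2 = w ∧ x = g j 12 := by
  rcases U_shape hx with ⟨u, rfl⟩ | ⟨i, j, rfl, hj⟩
  · exact absurd h not_adj_ll
  · obtain ⟨h1, h2⟩ := adj_wr.mp h.symm
    refine ⟨i, h1, ?_⟩
    rcases h2 with rfl | rfl
    · rfl
    · rcases hj with h|h|h|h|h|h <;> simp at h

lemma adjV_tW {w : γ} {x : GadgetV α β γ m} (hx : x ∈ Vbar α β γ m)
    (h : (gadgetGraph m T).Adj x (tW w)) : ∃ j, (T j).2.2 = w ∧ x = g j 13 := by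
  rcases V_shape hx with ⟨v, rfl⟩ | ⟨i, j, rfl, hj⟩
  · exact absurd h not_adj_ll
  · obtain ⟨h1, h2⟩ := adj_wr.mp h.symm
    refine ⟨i, h1, ?_⟩
    rcases h2 with rfl | rfl
    · rcases hj with h|h|h|h|h|h <;> simp at h
    · rfl

end Gadget
namespace Gadget

lemma nbr0 : ∀ x : Fin 18, pairAdj x 0 ↔ x = 2 := by decide
lemma nbr1 : ∀ x : Fin 18, pairAdj x 1 ↔ x = 2 ∨ x = 3 := by decide
lemma nbr2 : ∀ x : Fin 18, pairAdj x 2 ↔ x = 0 ∨ x = 1 ∨ x = 4 := by decide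
lemma nbr3 : ∀ x : Fin 18, pairAdj x 3 ↔ x = 1 ∨ x = 4 := by decide
lemma nbr4 : ∀ x : Fin 18, pairAdj x 4 ↔ x = 2 ∨ x = 3 ∨ x = 5 := by decide
lemma nbr5 : ∀ x : Fin 18, pairAdj x 5 ↔ x = 4 ∨ x = 11 := by decide
lemma nbr6 : ∀ x : Fin 18, pairAdj x 6 ↔ x = 8 := by decide
lemma nbr7 : ∀ x : Fin 18, pairAdj x 7 ↔ x = 8 ∨ x = 9 := by decide
lemma nbr8 : ∀ x : Fin 18, pairAdj x 8 ↔ x = 6 ∨ x = 7 ∨ x = 10 := by decide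
lemma nbr9 : ∀ x : Fin 18, pairAdj x 9 ↔ x = 7 ∨ x = 10 := by decide
lemma nbr10 : ∀ x : Fin 18, pairAdj x 10 ↔ x = 8 ∨ x = 9 ∨ x = 11 := by decide
lemma nbr11 : ∀ x : Fin 18, pairAdj x 11 ↔ x = 10 ∨ x = 5 ∨ x = 17 := by decide
lemma nbr12 : ∀ x : Fin 18, pairAdj x 12 ↔ x = 14 := by decide
lemma nbr13 : ∀ x : Fin 18, pairAdj x 13 ↔ x = 14 ∨ x = 15 := by decide
lemma nbr14 : ∀ x : Fin 18, pairAdj x 14 ↔ x = 12 ∨ x = 13 ∨ x = 16 := by decide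
lemma nbr15 : ∀ x : Fin 18, pairAdj x 15 ↔ x = 13 ∨ x = 16 := by decide
lemma nbr16 : ∀ x : Fin 18, pairAdj x 16 ↔ x = 14 ∨ x = 15 ∨ x = 17 := by decide
lemma nbr17 : ∀ x : Fin 18, pairAdj x 17 ↔ x = 16 ∨ x = 11 := by decide

end Gadget
namespace Gadget

section Back

variable {α β γ : Type*} {m : ℕ} {T : Fin m → α × β × γ}
variable {t : GadgetV α β γ m → Set (GadgetV α β γ m)}

/-- bundled hypotheses on the triple map -/
structure Good (T : Fin m → α × β × γ) (t : GadgetV α β γ m → Set (GadgetV α β γ m)) :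
    Prop where
  mem : ∀ x, x ∈ t x
  eq : ∀ x y, y ∈ t x → t y = t x
  tri : ∀ x, ∃ a b c, a ∈ Ubar α β γ m ∧ b ∈ Vbar α β γ m ∧ c ∈ Wbar α β γ m ∧
    t x = {a, b, c} ∧
    ((gadgetGraph m T).Adj a b ∧ (gadgetGraph m T).Adj b c ∨
     (gadgetGraph m T).Adj a b ∧ (gadgetGraph m T).Adj a c ∨
     (gadgetGraph m T).Adj a c ∧ (gadgetGraph m T).Adj b c)

variable (hG : Good T t)
include hG

lemma uniqU {z x y : GadgetV α β γ m} (hx : x ∈ t z) (hy : y ∈ t z)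
    (hxU : x ∈ Ubar α β γ m) (hyU : y ∈ Ubar α β γ m) : x = y := by
  obtain ⟨a, b, c, hA, hB, hC, hE, -⟩ := hG.tri z
  rw [hE] at hx hy
  rcases hx with rfl | rfl | rfl
  · rcases hy with rfl | rfl | rfl
    · rfl
    · exact absurd hB (fun h => U_V_disj hyU h)
    · exact absurd hC (fun h => U_W_disj hyU h)
  · exact absurd hB (fun h => U_V_disj hxU h)
  · exact absurd hC (fun h => U_W_disj hxU h)

lemma uniqV {z x y : GadgetV α β γ m} (hx : x ∈ t z) (hy : y ∈ t z)
    (hxV : x ∈ Vbar α β γ m) (hyV : y ∈ Vbar α β γ m) : x = y := by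
  obtain ⟨a, b, c, hA, hB, hC, hE, -⟩ := hG.tri z
  rw [hE] at hx hy
  rcases hx with rfl | rfl | rfl
  · exact absurd hA (fun h => U_V_disj h hxV)
  · rcases hy with rfl | rfl | rfl
    · exact absurd hA (fun h => U_V_disj h hyV)
    · rfl
    · exact absurd hC (fun h => V_W_disj hyV h)
  · exact absurd hC (fun h => V_W_disj hxV h)

lemma uniqW {z x y : GadgetV α β γ m} (hx : x ∈ t z) (hy : y ∈ t z)
    (hxW : x ∈ Wbar α β γ m) (hyW : y ∈ Wbar α β γ m) : x = y := by
  obtain ⟨a, b, c, hA, hB, hC, hE, -⟩ := hG.tri z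
  rw [hE] at hx hy
  rcases hx with rfl | rfl | rfl
  · exact absurd hA (fun h => U_W_disj h hxW)
  · exact absurd hB (fun h => V_W_disj h hxW)
  · rcases hy with rfl | rfl | rfl
    · exact absurd hA (fun h => U_W_disj h hyW)
    · exact absurd hB (fun h => V_W_disj h hyW)
    · rfl

end Back

end Gadget
namespace Gadget

section E

variable {α β γ : Type*} {m : ℕ} {T : Fin m → α × β × γ}
variable {t : GadgetV α β γ m → Set (GadgetV α β γ m)}
variable (hG : Good T t)
include hG

lemma E0 (i : Fin m) :
    ((g i 2 : GadgetV α β γ m) ∈ t (g i 0) ∧ g i 1 ∈ t (g i 0)) ∨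
    ((g i 2 : GadgetV α β γ m) ∈ t (g i 0) ∧ g i 4 ∈ t (g i 0)) ∨
    ((tU (T i).1 : GadgetV α β γ m) ∈ t (g i 0) ∧
      ∃ j, (T j).1 = (T i).1 ∧ g j 1 ∈ t (g i 0)) := by
  obtain ⟨a, b, c, hA, hB, hC, hE, hTwo⟩ := hG.tri (g i 0)
  have hx := hG.mem (g i 0)
  rw [hE] at hx ⊢
  have hb : b = g i 0 := by
    rcases hx with h | h | h
    · rw [← h] at hA; exact absurd (mem_U_g.mp hA) (by decide)
    · exact h.symm
    · rw [← h] at hC; exact absurd (mem_W_g.mp hC) (by decide)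
  subst hb
  -- no W-vertex is adjacent to (i,0)
  have hcw : ¬ (gadgetGraph m T).Adj (g i 0) c := by
    intro h
    rcases adjW_decode hC h.symm with ⟨-, h0 | h0⟩ | ⟨j, -, hpa, hj⟩
    · exact absurd h0 (by decide)
    · exact absurd h0 (by decide)
    · rw [nbr0] at hpa; subst hpa; simp at hj
  rcases hTwo with ⟨h1, h2⟩ | ⟨h1, h2⟩ | ⟨h1, h2⟩
  · exact absurd h2 hcw
  · -- a adjacent to (i,0) and to c
    rcases adjU_decode hA h1 with ⟨rfl, -⟩ | ⟨j, rfl, hpa, hj⟩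
    · -- a = tU (T i).1 ; c = g j 1 with (T j).1 = (T i).1
      obtain ⟨j, hj1, rfl⟩ := adjW_tU hC h2.symm
      exact Or.inr (Or.inr ⟨by simp, j, hj1, by simp⟩)
    · rw [nbr0] at hpa; subst hpa
      rcases adjW_decode hC h2.symm with ⟨-, h0 | h0⟩ | ⟨l, rfl, hpa', hl⟩
      · exact absurd h0 (by decide)
      · exact absurd h0 (by decide)
      · rw [nbr2] at hpa'
        rcases hpa' with rfl | rfl | rfl
        · simp at hl
        · exact Or.inl ⟨by simp, by simp⟩
        · exact Or.inr (Or.inl ⟨by simp, by simp⟩)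
  · exact absurd h2 hcw

end E

end Gadget
namespace Gadget

section E

variable {α β γ : Type*} {m : ℕ} {T : Fin m → α × β × γ}
variable {t : GadgetV α β γ m → Set (GadgetV α β γ m)}
variable (hG : Good T t)
include hG

lemma E2 (i : Fin m) :
    ((g i 0 : GadgetV α β γ m) ∈ t (g i 2) ∧ g i 1 ∈ t (g i 2)) ∨
    ((g i 0 : GadgetV α β γ m) ∈ t (g i 2) ∧ g i 4 ∈ t (g i 2)) ∨
    ((g i 3 : GadgetV α β γ m) ∈ t (g i 2) ∧ g i 1 ∈ t (g i 2)) ∨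
    ((g i 3 : GadgetV α β γ m) ∈ t (g i 2) ∧ g i 4 ∈ t (g i 2)) := by
  obtain ⟨a, b, c, hA, hB, hC, hE, hTwo⟩ := hG.tri (g i 2)
  have hx := hG.mem (g i 2)
  rw [hE] at hx ⊢
  have ha : a = g i 2 := by
    rcases hx with h | h | h
    · exact h.symm
    · rw [← h] at hB; exact absurd (mem_V_g.mp hB) (by decide)
    · rw [← h] at hC; exact absurd (mem_W_g.mp hC) (by decide)
  subst ha
  rcases hTwo with ⟨h1, h2⟩ | ⟨h1, h2⟩ | ⟨h1, h2⟩
  · -- b ∈ N_V(2) = {0}, c ∈ N_W(0) = ∅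
    rcases adjV_decode hB h1.symm with ⟨-, h0 | h0⟩ | ⟨l, rfl, hpa, hl⟩
    · exact absurd h0 (by decide)
    · exact absurd h0 (by decide)
    · rw [nbr2] at hpa
      rcases hpa with rfl | rfl | rfl
      · rcases adjW_decode hC h2.symm with ⟨-, h0 | h0⟩ | ⟨l', rfl, hpa', hl'⟩
        · exact absurd h0 (by decide)
        · exact absurd h0 (by decide)
        · rw [nbr0] at hpa'; subst hpa'; simp at hl'
      · simp at hl
      · simp at hl
  · -- b ∈ N_V(2) = {0}, c ∈ N_W(2) = {1,4}
    rcases adjV_decode hB h1.symm with ⟨-, h0 | h0⟩ | ⟨l, rfl, hpa, hl⟩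
    · exact absurd h0 (by decide)
    · exact absurd h0 (by decide)
    · rw [nbr2] at hpa
      rcases hpa with rfl | rfl | rfl
      · rcases adjW_decode hC h2.symm with ⟨-, h0 | h0⟩ | ⟨l', rfl, hpa', hl'⟩
        · exact absurd h0 (by decide)
        · exact absurd h0 (by decide)
        · rw [nbr2] at hpa'
          rcases hpa' with rfl | rfl | rfl
          · simp at hl'
          · exact Or.inl ⟨by simp, by simp⟩
          · exact Or.inr (Or.inl ⟨by simp, by simp⟩)
      · simp at hl
      · simp at hl
  · -- c ∈ N_W(2) = {1,4}, b ∈ N_V(c)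
    rcases adjW_decode hC h1.symm with ⟨-, h0 | h0⟩ | ⟨l, rfl, hpa, hl⟩
    · exact absurd h0 (by decide)
    · exact absurd h0 (by decide)
    · rw [nbr2] at hpa
      rcases hpa with rfl | rfl | rfl
      · simp at hl
      · rcases adjV_decode hB h2 with ⟨-, h0 | h0⟩ | ⟨l', rfl, hpa', hl'⟩
        · exact absurd h0 (by decide)
        · exact absurd h0 (by decide)
        · rw [nbr1] at hpa'
          rcases hpa' with rfl | rfl
          · simp at hl'
          · exact Or.inr (Or.inr (Or.inl ⟨by simp, by simp⟩))
      · rcases adjV_decode hB h2 with ⟨-, h0 | h0⟩ | ⟨l', rfl, hpa', hl'⟩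
        · exact absurd h0 (by decide)
        · exact absurd h0 (by decide)
        · rw [nbr4] at hpa'
          rcases hpa' with rfl | rfl | rfl
          · simp at hl'
          · exact Or.inr (Or.inr (Or.inr ⟨by simp, by simp⟩))
          · simp at hl'

end E

end Gadget
namespace Gadget

section E

variable {α β γ : Type*} {m : ℕ} {T : Fin m → α × β × γ}
variable {t : GadgetV α β γ m → Set (GadgetV α β γ m)}
variable (hG : Good T t)
include hG

lemma E3 (i : Fin m) :
    ((g i 2 : GadgetV α β γ m) ∈ t (g i 3) ∧ g i 1 ∈ t (g i 3)) ∨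
    ((tU (T i).1 : GadgetV α β γ m) ∈ t (g i 3) ∧ g i 1 ∈ t (g i 3)) ∨
    ((g i 2 : GadgetV α β γ m) ∈ t (g i 3) ∧ g i 4 ∈ t (g i 3)) ∨
    ((g i 5 : GadgetV α β γ m) ∈ t (g i 3) ∧ g i 4 ∈ t (g i 3)) := by
  obtain ⟨a, b, c, hA, hB, hC, hE, hTwo⟩ := hG.tri (g i 3)
  have hx := hG.mem (g i 3)
  rw [hE] at hx ⊢
  have hb : b = g i 3 := by
    rcases hx with h | h | h
    · rw [← h] at hA; exact absurd (mem_U_g.mp hA) (by decide)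
    · exact h.symm
    · rw [← h] at hC; exact absurd (mem_W_g.mp hC) (by decide)
  subst hb
  have hnoU : ¬ (gadgetGraph m T).Adj a (g i 3) := by
    intro h
    rcases adjU_decode hA h with ⟨-, h0 | h0⟩ | ⟨l, rfl, hpa, hl⟩
    · exact absurd h0 (by decide)
    · exact absurd h0 (by decide)
    · rw [nbr3] at hpa; rcases hpa with rfl | rfl <;> simp at hl
  rcases hTwo with ⟨h1, h2⟩ | ⟨h1, h2⟩ | ⟨h1, h2⟩
  · exact absurd h1 hnoU
  · exact absurd h1 hnoU
  · rcases adjW_decode hC h2.symm with ⟨-, h0 | h0⟩ | ⟨l, rfl, hpa, hl⟩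
    · exact absurd h0 (by decide)
    · exact absurd h0 (by decide)
    · rw [nbr3] at hpa
      rcases hpa with rfl | rfl
      · rcases adjU_decode hA h1 with ⟨rfl, -⟩ | ⟨l', rfl, hpa', hl'⟩
        · exact Or.inr (Or.inl ⟨by simp, by simp⟩)
        · rw [nbr1] at hpa'
          rcases hpa' with rfl | rfl
          · exact Or.inl ⟨by simp, by simp⟩
          · simp at hl'
      · rcases adjU_decode hA h1 with ⟨-, h0 | h0⟩ | ⟨l', rfl, hpa', hl'⟩
        · exact absurd h0 (by decide)
        · exact absurd h0 (by decide)
        · rw [nbr4] at hpa'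
          rcases hpa' with rfl | rfl | rfl
          · exact Or.inr (Or.inr (Or.inl ⟨by simp, by simp⟩))
          · simp at hl'
          · exact Or.inr (Or.inr (Or.inr ⟨by simp, by simp⟩))

lemma E5 (i : Fin m) :
    ((g i 3 : GadgetV α β γ m) ∈ t (g i 5) ∧ g i 4 ∈ t (g i 5)) ∨
    ((g i 11 : GadgetV α β γ m) ∈ t (g i 5) ∧ g i 4 ∈ t (g i 5)) ∨
    ((g i 11 : GadgetV α β γ m) ∈ t (g i 5) ∧ g i 10 ∈ t (g i 5)) ∨
    ((g i 11 : GadgetV α β γ m) ∈ t (g i 5) ∧ g i 17 ∈ t (g i 5)) := by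
  obtain ⟨a, b, c, hA, hB, hC, hE, hTwo⟩ := hG.tri (g i 5)
  have hx := hG.mem (g i 5)
  rw [hE] at hx ⊢
  have ha : a = g i 5 := by
    rcases hx with h | h | h
    · exact h.symm
    · rw [← h] at hB; exact absurd (mem_V_g.mp hB) (by decide)
    · rw [← h] at hC; exact absurd (mem_W_g.mp hC) (by decide)
  subst ha
  rcases hTwo with ⟨h1, h2⟩ | ⟨h1, h2⟩ | ⟨h1, h2⟩
  · rcases adjV_decode hB h1.symm with ⟨-, h0 | h0⟩ | ⟨l, rfl, hpa, hl⟩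
    · exact absurd h0 (by decide)
    · exact absurd h0 (by decide)
    · rw [nbr5] at hpa
      rcases hpa with rfl | rfl
      · simp at hl
      · rcases adjW_decode hC h2.symm with ⟨-, h0 | h0⟩ | ⟨l', rfl, hpa', hl'⟩
        · exact absurd h0 (by decide)
        · exact absurd h0 (by decide)
        · rw [nbr11] at hpa'
          rcases hpa' with rfl | rfl | rfl
          · exact Or.inr (Or.inr (Or.inl ⟨by simp, by simp⟩))
          · simp at hl'
          · exact Or.inr (Or.inr (Or.inr ⟨by simp, by simp⟩))
  · rcases adjV_decode hB h1.symm with ⟨-, h0 | h0⟩ | ⟨l, rfl, hpa, hl⟩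
    · exact absurd h0 (by decide)
    · exact absurd h0 (by decide)
    · rw [nbr5] at hpa
      rcases hpa with rfl | rfl
      · simp at hl
      · rcases adjW_decode hC h2.symm with ⟨-, h0 | h0⟩ | ⟨l', rfl, hpa', hl'⟩
        · exact absurd h0 (by decide)
        · exact absurd h0 (by decide)
        · rw [nbr5] at hpa'
          rcases hpa' with rfl | rfl
          · exact Or.inr (Or.inl ⟨by simp, by simp⟩)
          · simp at hl'
  · rcases adjW_decode hC h1.symm with ⟨-, h0 | h0⟩ | ⟨l, rfl, hpa, hl⟩
    · exact absurd h0 (by decide)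
    · exact absurd h0 (by decide)
    · rw [nbr5] at hpa
      rcases hpa with rfl | rfl
      · rcases adjV_decode hB h2 with ⟨-, h0 | h0⟩ | ⟨l', rfl, hpa', hl'⟩
        · exact absurd h0 (by decide)
        · exact absurd h0 (by decide)
        · rw [nbr4] at hpa'
          rcases hpa' with rfl | rfl | rfl
          · simp at hl'
          · exact Or.inl ⟨by simp, by simp⟩
          · simp at hl'
      · simp at hl

lemma E6 (i : Fin m) :
    ((g i 8 : GadgetV α β γ m) ∈ t (g i 6) ∧ g i 7 ∈ t (g i 6)) ∨
    ((g i 8 : GadgetV α β γ m) ∈ t (g i 6) ∧ g i 10 ∈ t (g i 6)) ∨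
    ((tV (T i).2.1 : GadgetV α β γ m) ∈ t (g i 6) ∧
      ∃ j, (T j).2.1 = (T i).2.1 ∧ g j 7 ∈ t (g i 6)) := by
  obtain ⟨a, b, c, hA, hB, hC, hE, hTwo⟩ := hG.tri (g i 6)
  have hx := hG.mem (g i 6)
  rw [hE] at hx ⊢
  have ha : a = g i 6 := by
    rcases hx with h | h | h
    · exact h.symm
    · rw [← h] at hB; exact absurd (mem_V_g.mp hB) (by decide)
    · rw [← h] at hC; exact absurd (mem_W_g.mp hC) (by decide)
  subst ha
  have hnoW : ¬ (gadgetGraph m T).Adj (g i 6) c := by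
    intro h
    rcases adjW_decode hC h.symm with ⟨-, h0 | h0⟩ | ⟨l, rfl, hpa, hl⟩
    · exact absurd h0 (by decide)
    · exact absurd h0 (by decide)
    · rw [nbr6] at hpa; subst hpa; simp at hl
  rcases hTwo with ⟨h1, h2⟩ | ⟨h1, h2⟩ | ⟨h1, h2⟩
  · rcases adjV_decode hB h1.symm with ⟨rfl, -⟩ | ⟨l, rfl, hpa, hl⟩
    · obtain ⟨j, hj1, rfl⟩ := adjW_tV hC h2.symm
      exact Or.inr (Or.inr ⟨by simp, j, hj1, by simp⟩)
    · rw [nbr6] at hpa; subst hpa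
      rcases adjW_decode hC h2.symm with ⟨-, h0 | h0⟩ | ⟨l', rfl, hpa', hl'⟩
      · exact absurd h0 (by decide)
      · exact absurd h0 (by decide)
      · rw [nbr8] at hpa'
        rcases hpa' with rfl | rfl | rfl
        · simp at hl'
        · exact Or.inl ⟨by simp, by simp⟩
        · exact Or.inr (Or.inl ⟨by simp, by simp⟩)
  · exact absurd h2 hnoW
  · exact absurd h1 hnoW

lemma E8 (i : Fin m) :
    ((g i 6 : GadgetV α β γ m) ∈ t (g i 8) ∧ g i 7 ∈ t (g i 8)) ∨
    ((g i 6 : GadgetV α β γ m) ∈ t (g i 8) ∧ g i 10 ∈ t (g i 8)) ∨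
    ((g i 9 : GadgetV α β γ m) ∈ t (g i 8) ∧ g i 7 ∈ t (g i 8)) ∨
    ((g i 9 : GadgetV α β γ m) ∈ t (g i 8) ∧ g i 10 ∈ t (g i 8)) := by
  obtain ⟨a, b, c, hA, hB, hC, hE, hTwo⟩ := hG.tri (g i 8)
  have hx := hG.mem (g i 8)
  rw [hE] at hx ⊢
  have hb : b = g i 8 := by
    rcases hx with h | h | h
    · rw [← h] at hA; exact absurd (mem_U_g.mp hA) (by decide)
    · exact h.symm
    · rw [← h] at hC; exact absurd (mem_W_g.mp hC) (by decide)
  subst hb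
  rcases hTwo with ⟨h1, h2⟩ | ⟨h1, h2⟩ | ⟨h1, h2⟩
  · rcases adjU_decode hA h1 with ⟨-, h0 | h0⟩ | ⟨l, rfl, hpa, hl⟩
    · exact absurd h0 (by decide)
    · exact absurd h0 (by decide)
    · rw [nbr8] at hpa
      rcases hpa with rfl | rfl | rfl
      · rcases adjW_decode hC h2.symm with ⟨-, h0 | h0⟩ | ⟨l', rfl, hpa', hl'⟩
        · exact absurd h0 (by decide)
        · exact absurd h0 (by decide)
        · rw [nbr8] at hpa'
          rcases hpa' with rfl | rfl | rfl
          · simp at hl'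
          · exact Or.inl ⟨by simp, by simp⟩
          · exact Or.inr (Or.inl ⟨by simp, by simp⟩)
      · simp at hl
      · simp at hl
  · rcases adjU_decode hA h1 with ⟨-, h0 | h0⟩ | ⟨l, rfl, hpa, hl⟩
    · exact absurd h0 (by decide)
    · exact absurd h0 (by decide)
    · rw [nbr8] at hpa
      rcases hpa with rfl | rfl | rfl
      · rcases adjW_decode hC h2.symm with ⟨-, h0 | h0⟩ | ⟨l', rfl, hpa', hl'⟩
        · exact absurd h0 (by decide)
        · exact absurd h0 (by decide)
        · rw [nbr6] at hpa'; subst hpa'; simp at hl'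
      · simp at hl
      · simp at hl
  · rcases adjW_decode hC h2.symm with ⟨-, h0 | h0⟩ | ⟨l, rfl, hpa, hl⟩
    · exact absurd h0 (by decide)
    · exact absurd h0 (by decide)
    · rw [nbr8] at hpa
      rcases hpa with rfl | rfl | rfl
      · simp at hl
      · rcases adjU_decode hA h1 with ⟨-, h0 | h0⟩ | ⟨l', rfl, hpa', hl'⟩
        · exact absurd h0 (by decide)
        · exact absurd h0 (by decide)
        · rw [nbr7] at hpa'
          rcases hpa' with rfl | rfl
          · simp at hl'
          · exact Or.inr (Or.inr (Or.inl ⟨by simp, by simp⟩))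
      · rcases adjU_decode hA h1 with ⟨-, h0 | h0⟩ | ⟨l', rfl, hpa', hl'⟩
        · exact absurd h0 (by decide)
        · exact absurd h0 (by decide)
        · rw [nbr10] at hpa'
          rcases hpa' with rfl | rfl | rfl
          · simp at hl'
          · exact Or.inr (Or.inr (Or.inr ⟨by simp, by simp⟩))
          · simp at hl'

end E

end Gadget
namespace Gadget

section E

variable {α β γ : Type*} {m : ℕ} {T : Fin m → α × β × γ}
variable {t : GadgetV α β γ m → Set (GadgetV α β γ m)}
variable (hG : Good T t)
include hG

lemma E9 (i : Fin m) :
    ((g i 8 : GadgetV α β γ m) ∈ t (g i 9) ∧ g i 7 ∈ t (g i 9)) ∨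
    ((tV (T i).2.1 : GadgetV α β γ m) ∈ t (g i 9) ∧ g i 7 ∈ t (g i 9)) ∨
    ((g i 8 : GadgetV α β γ m) ∈ t (g i 9) ∧ g i 10 ∈ t (g i 9)) ∨
    ((g i 11 : GadgetV α β γ m) ∈ t (g i 9) ∧ g i 10 ∈ t (g i 9)) := by
  obtain ⟨a, b, c, hA, hB, hC, hE, hTwo⟩ := hG.tri (g i 9)
  have hx := hG.mem (g i 9)
  rw [hE] at hx ⊢
  have ha : a = g i 9 := by
    rcases hx with h | h | h
    · exact h.symm
    · rw [← h] at hB; exact absurd (mem_V_g.mp hB) (by decide)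
    · rw [← h] at hC; exact absurd (mem_W_g.mp hC) (by decide)
  subst ha
  have hnoV : ¬ (gadgetGraph m T).Adj (g i 9) b := by
    intro h
    rcases adjV_decode hB h.symm with ⟨-, h0 | h0⟩ | ⟨l, rfl, hpa, hl⟩
    · exact absurd h0 (by decide)
    · exact absurd h0 (by decide)
    · rw [nbr9] at hpa; rcases hpa with rfl | rfl <;> simp at hl
  rcases hTwo with ⟨h1, h2⟩ | ⟨h1, h2⟩ | ⟨h1, h2⟩
  · exact absurd h1 hnoV
  · exact absurd h1 hnoV
  · rcases adjW_decode hC h1.symm with ⟨-, h0 | h0⟩ | ⟨l, rfl, hpa, hl⟩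
    · exact absurd h0 (by decide)
    · exact absurd h0 (by decide)
    · rw [nbr9] at hpa
      rcases hpa with rfl | rfl
      · rcases adjV_decode hB h2 with ⟨rfl, -⟩ | ⟨l', rfl, hpa', hl'⟩
        · exact Or.inr (Or.inl ⟨by simp, by simp⟩)
        · rw [nbr7] at hpa'
          rcases hpa' with rfl | rfl
          · exact Or.inl ⟨by simp, by simp⟩
          · simp at hl'
      · rcases adjV_decode hB h2 with ⟨-, h0 | h0⟩ | ⟨l', rfl, hpa', hl'⟩
        · exact absurd h0 (by decide)
        · exact absurd h0 (by decide)
        · rw [nbr10] at hpa'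
          rcases hpa' with rfl | rfl | rfl
          · exact Or.inr (Or.inr (Or.inl ⟨by simp, by simp⟩))
          · simp at hl'
          · exact Or.inr (Or.inr (Or.inr ⟨by simp, by simp⟩))

lemma E10 (i : Fin m) :
    ((g i 6 : GadgetV α β γ m) ∈ t (g i 10) ∧ g i 8 ∈ t (g i 10)) ∨
    ((g i 5 : GadgetV α β γ m) ∈ t (g i 10) ∧ g i 11 ∈ t (g i 10)) ∨
    ((g i 9 : GadgetV α β γ m) ∈ t (g i 10) ∧ g i 8 ∈ t (g i 10)) ∨
    ((g i 9 : GadgetV α β γ m) ∈ t (g i 10) ∧ g i 11 ∈ t (g i 10)) := by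
  obtain ⟨a, b, c, hA, hB, hC, hE, hTwo⟩ := hG.tri (g i 10)
  have hx := hG.mem (g i 10)
  rw [hE] at hx ⊢
  have hc : c = g i 10 := by
    rcases hx with h | h | h
    · rw [← h] at hA; exact absurd (mem_U_g.mp hA) (by decide)
    · rw [← h] at hB; exact absurd (mem_V_g.mp hB) (by decide)
    · exact h.symm
  subst hc
  rcases hTwo with ⟨h1, h2⟩ | ⟨h1, h2⟩ | ⟨h1, h2⟩
  · rcases adjV_decode hB h2 with ⟨-, h0 | h0⟩ | ⟨l, rfl, hpa, hl⟩
    · exact absurd h0 (by decide)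
    · exact absurd h0 (by decide)
    · rw [nbr10] at hpa
      rcases hpa with rfl | rfl | rfl
      · rcases adjU_decode hA h1 with ⟨-, h0 | h0⟩ | ⟨l', rfl, hpa', hl'⟩
        · exact absurd h0 (by decide)
        · exact absurd h0 (by decide)
        · rw [nbr8] at hpa'
          rcases hpa' with rfl | rfl | rfl
          · exact Or.inl ⟨by simp, by simp⟩
          · simp at hl'
          · simp at hl'
      · simp at hl
      · rcases adjU_decode hA h1 with ⟨-, h0 | h0⟩ | ⟨l', rfl, hpa', hl'⟩
        · exact absurd h0 (by decide)
        · exact absurd h0 (by decide)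
        · rw [nbr11] at hpa'
          rcases hpa' with rfl | rfl | rfl
          · simp at hl'
          · exact Or.inr (Or.inl ⟨by simp, by simp⟩)
          · simp at hl'
  · rcases adjU_decode hA h2 with ⟨-, h0 | h0⟩ | ⟨l, rfl, hpa, hl⟩
    · exact absurd h0 (by decide)
    · exact absurd h0 (by decide)
    · rw [nbr10] at hpa
      rcases hpa with rfl | rfl | rfl
      · simp at hl
      · rcases adjV_decode hB h1.symm with ⟨-, h0 | h0⟩ | ⟨l', rfl, hpa', hl'⟩
        · exact absurd h0 (by decide)
        · exact absurd h0 (by decide)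
        · rw [nbr9] at hpa'
          rcases hpa' with rfl | rfl <;> simp at hl'
      · simp at hl
  · rcases adjU_decode hA h1 with ⟨-, h0 | h0⟩ | ⟨l, rfl, hpa, hl⟩
    · exact absurd h0 (by decide)
    · exact absurd h0 (by decide)
    · rw [nbr10] at hpa
      rcases hpa with rfl | rfl | rfl
      · simp at hl
      · rcases adjV_decode hB h2 with ⟨-, h0 | h0⟩ | ⟨l', rfl, hpa', hl'⟩
        · exact absurd h0 (by decide)
        · exact absurd h0 (by decide)
        · rw [nbr10] at hpa'
          rcases hpa' with rfl | rfl | rfl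
          · exact Or.inr (Or.inr (Or.inl ⟨by simp, by simp⟩))
          · simp at hl'
          · exact Or.inr (Or.inr (Or.inr ⟨by simp, by simp⟩))
      · simp at hl

lemma E12 (i : Fin m) :
    ((g i 13 : GadgetV α β γ m) ∈ t (g i 12) ∧ g i 14 ∈ t (g i 12)) ∨
    ((g i 16 : GadgetV α β γ m) ∈ t (g i 12) ∧ g i 14 ∈ t (g i 12)) ∨
    ((tW (T i).2.2 : GadgetV α β γ m) ∈ t (g i 12) ∧
      ∃ j, (T j).2.2 = (T i).2.2 ∧ g j 13 ∈ t (g i 12)) := by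
  obtain ⟨a, b, c, hA, hB, hC, hE, hTwo⟩ := hG.tri (g i 12)
  have hx := hG.mem (g i 12)
  rw [hE] at hx ⊢
  have ha : a = g i 12 := by
    rcases hx with h | h | h
    · exact h.symm
    · rw [← h] at hB; exact absurd (mem_V_g.mp hB) (by decide)
    · rw [← h] at hC; exact absurd (mem_W_g.mp hC) (by decide)
  subst ha
  have hnoV : ¬ (gadgetGraph m T).Adj (g i 12) b := by
    intro h
    rcases adjV_decode hB h.symm with ⟨-, h0 | h0⟩ | ⟨l, rfl, hpa, hl⟩
    · exact absurd h0 (by decide)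
    · exact absurd h0 (by decide)
    · rw [nbr12] at hpa; subst hpa; simp at hl
  rcases hTwo with ⟨h1, h2⟩ | ⟨h1, h2⟩ | ⟨h1, h2⟩
  · exact absurd h1 hnoV
  · exact absurd h1 hnoV
  · rcases adjW_decode hC h1.symm with ⟨rfl, -⟩ | ⟨l, rfl, hpa, hl⟩
    · obtain ⟨j, hj1, rfl⟩ := adjV_tW hB h2
      exact Or.inr (Or.inr ⟨by simp, j, hj1, by simp⟩)
    · rw [nbr12] at hpa; subst hpa
      rcases adjV_decode hB h2 with ⟨-, h0 | h0⟩ | ⟨l', rfl, hpa', hl'⟩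
      · exact absurd h0 (by decide)
      · exact absurd h0 (by decide)
      · rw [nbr14] at hpa'
        rcases hpa' with rfl | rfl | rfl
        · simp at hl'
        · exact Or.inl ⟨by simp, by simp⟩
        · exact Or.inr (Or.inl ⟨by simp, by simp⟩)

lemma E13 (i : Fin m) :
    ((g i 12 : GadgetV α β γ m) ∈ t (g i 13) ∧ g i 14 ∈ t (g i 13)) ∨
    ((g i 15 : GadgetV α β γ m) ∈ t (g i 13) ∧ g i 14 ∈ t (g i 13)) ∨
    ((g i 15 : GadgetV α β γ m) ∈ t (g i 13) ∧ tW (T i).2.2 ∈ t (g i 13)) ∨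
    ((tW (T i).2.2 : GadgetV α β γ m) ∈ t (g i 13) ∧
      ∃ j, (T j).2.2 = (T i).2.2 ∧ g j 12 ∈ t (g i 13)) := by
  obtain ⟨a, b, c, hA, hB, hC, hE, hTwo⟩ := hG.tri (g i 13)
  have hx := hG.mem (g i 13)
  rw [hE] at hx ⊢
  have hb : b = g i 13 := by
    rcases hx with h | h | h
    · rw [← h] at hA; exact absurd (mem_U_g.mp hA) (by decide)
    · exact h.symm
    · rw [← h] at hC; exact absurd (mem_W_g.mp hC) (by decide)
  subst hb
  rcases hTwo with ⟨h1, h2⟩ | ⟨h1, h2⟩ | ⟨h1, h2⟩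
  · rcases adjU_decode hA h1 with ⟨-, h0 | h0⟩ | ⟨l, rfl, hpa, hl⟩
    · exact absurd h0 (by decide)
    · exact absurd h0 (by decide)
    · rw [nbr13] at hpa
      rcases hpa with rfl | rfl
      · simp at hl
      · rcases adjW_decode hC h2.symm with ⟨rfl, -⟩ | ⟨l', rfl, hpa', hl'⟩
        · exact Or.inr (Or.inr (Or.inl ⟨by simp, by simp⟩))
        · rw [nbr13] at hpa'
          rcases hpa' with rfl | rfl
          · exact Or.inr (Or.inl ⟨by simp, by simp⟩)
          · simp at hl'
  · rcases adjU_decode hA h1 with ⟨-, h0 | h0⟩ | ⟨l, rfl, hpa, hl⟩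
    · exact absurd h0 (by decide)
    · exact absurd h0 (by decide)
    · rw [nbr13] at hpa
      rcases hpa with rfl | rfl
      · simp at hl
      · rcases adjW_decode hC h2.symm with ⟨-, h0 | h0⟩ | ⟨l', rfl, hpa', hl'⟩
        · exact absurd h0 (by decide)
        · exact absurd h0 (by decide)
        · rw [nbr15] at hpa'
          rcases hpa' with rfl | rfl <;> simp at hl'
  · rcases adjW_decode hC h2.symm with ⟨rfl, -⟩ | ⟨l, rfl, hpa, hl⟩
    · obtain ⟨j, hj1, rfl⟩ := adjU_tW hA h1
      exact Or.inr (Or.inr (Or.inr ⟨by simp, j, hj1, by simp⟩))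
    · rw [nbr13] at hpa
      rcases hpa with rfl | rfl
      · rcases adjU_decode hA h1 with ⟨-, h0 | h0⟩ | ⟨l', rfl, hpa', hl'⟩
        · exact absurd h0 (by decide)
        · exact absurd h0 (by decide)
        · rw [nbr14] at hpa'
          rcases hpa' with rfl | rfl | rfl
          · exact Or.inl ⟨by simp, by simp⟩
          · simp at hl'
          · simp at hl'
      · simp at hl

lemma E15 (i : Fin m) :
    ((g i 13 : GadgetV α β γ m) ∈ t (g i 15) ∧ g i 14 ∈ t (g i 15)) ∨
    ((g i 13 : GadgetV α β γ m) ∈ t (g i 15) ∧ tW (T i).2.2 ∈ t (g i 15)) ∨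
    ((g i 16 : GadgetV α β γ m) ∈ t (g i 15) ∧ g i 14 ∈ t (g i 15)) ∨
    ((g i 16 : GadgetV α β γ m) ∈ t (g i 15) ∧ g i 17 ∈ t (g i 15)) := by
  obtain ⟨a, b, c, hA, hB, hC, hE, hTwo⟩ := hG.tri (g i 15)
  have hx := hG.mem (g i 15)
  rw [hE] at hx ⊢
  have ha : a = g i 15 := by
    rcases hx with h | h | h
    · exact h.symm
    · rw [← h] at hB; exact absurd (mem_V_g.mp hB) (by decide)
    · rw [← h] at hC; exact absurd (mem_W_g.mp hC) (by decide)
  subst ha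
  have hnoW : ¬ (gadgetGraph m T).Adj (g i 15) c := by
    intro h
    rcases adjW_decode hC h.symm with ⟨-, h0 | h0⟩ | ⟨l, rfl, hpa, hl⟩
    · exact absurd h0 (by decide)
    · exact absurd h0 (by decide)
    · rw [nbr15] at hpa; rcases hpa with rfl | rfl <;> simp at hl
  rcases hTwo with ⟨h1, h2⟩ | ⟨h1, h2⟩ | ⟨h1, h2⟩
  · rcases adjV_decode hB h1.symm with ⟨-, h0 | h0⟩ | ⟨l, rfl, hpa, hl⟩
    · exact absurd h0 (by decide)
    · exact absurd h0 (by decide)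
    · rw [nbr15] at hpa
      rcases hpa with rfl | rfl
      · rcases adjW_decode hC h2.symm with ⟨rfl, -⟩ | ⟨l', rfl, hpa', hl'⟩
        · exact Or.inr (Or.inl ⟨by simp, by simp⟩)
        · rw [nbr13] at hpa'
          rcases hpa' with rfl | rfl
          · exact Or.inl ⟨by simp, by simp⟩
          · simp at hl'
      · rcases adjW_decode hC h2.symm with ⟨-, h0 | h0⟩ | ⟨l', rfl, hpa', hl'⟩
        · exact absurd h0 (by decide)
        · exact absurd h0 (by decide)
        · rw [nbr16] at hpa'
          rcases hpa' with rfl | rfl | rfl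
          · exact Or.inr (Or.inr (Or.inl ⟨by simp, by simp⟩))
          · simp at hl'
          · exact Or.inr (Or.inr (Or.inr ⟨by simp, by simp⟩))
  · exact absurd h2 hnoW
  · exact absurd h1 hnoW

lemma E16 (i : Fin m) :
    ((g i 15 : GadgetV α β γ m) ∈ t (g i 16) ∧ g i 14 ∈ t (g i 16)) ∨
    ((g i 15 : GadgetV α β γ m) ∈ t (g i 16) ∧ g i 17 ∈ t (g i 16)) ∨
    ((g i 12 : GadgetV α β γ m) ∈ t (g i 16) ∧ g i 14 ∈ t (g i 16)) := by
  obtain ⟨a, b, c, hA, hB, hC, hE, hTwo⟩ := hG.tri (g i 16)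
  have hx := hG.mem (g i 16)
  rw [hE] at hx ⊢
  have hb : b = g i 16 := by
    rcases hx with h | h | h
    · rw [← h] at hA; exact absurd (mem_U_g.mp hA) (by decide)
    · exact h.symm
    · rw [← h] at hC; exact absurd (mem_W_g.mp hC) (by decide)
  subst hb
  rcases hTwo with ⟨h1, h2⟩ | ⟨h1, h2⟩ | ⟨h1, h2⟩
  · rcases adjU_decode hA h1 with ⟨-, h0 | h0⟩ | ⟨l, rfl, hpa, hl⟩
    · exact absurd h0 (by decide)
    · exact absurd h0 (by decide)
    · rw [nbr16] at hpa
      rcases hpa with rfl | rfl | rfl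
      · simp at hl
      · rcases adjW_decode hC h2.symm with ⟨-, h0 | h0⟩ | ⟨l', rfl, hpa', hl'⟩
        · exact absurd h0 (by decide)
        · exact absurd h0 (by decide)
        · rw [nbr16] at hpa'
          rcases hpa' with rfl | rfl | rfl
          · exact Or.inl ⟨by simp, by simp⟩
          · simp at hl'
          · exact Or.inr (Or.inl ⟨by simp, by simp⟩)
      · simp at hl
  · rcases adjU_decode hA h1 with ⟨-, h0 | h0⟩ | ⟨l, rfl, hpa, hl⟩
    · exact absurd h0 (by decide)
    · exact absurd h0 (by decide)
    · rw [nbr16] at hpa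
      rcases hpa with rfl | rfl | rfl
      · simp at hl
      · rcases adjW_decode hC h2.symm with ⟨-, h0 | h0⟩ | ⟨l', rfl, hpa', hl'⟩
        · exact absurd h0 (by decide)
        · exact absurd h0 (by decide)
        · rw [nbr15] at hpa'
          rcases hpa' with rfl | rfl <;> simp at hl'
      · simp at hl
  · rcases adjW_decode hC h2.symm with ⟨-, h0 | h0⟩ | ⟨l, rfl, hpa, hl⟩
    · exact absurd h0 (by decide)
    · exact absurd h0 (by decide)
    · rw [nbr16] at hpa
      rcases hpa with rfl | rfl | rfl
      · rcases adjU_decode hA h1 with ⟨-, h0 | h0⟩ | ⟨l', rfl, hpa', hl'⟩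
        · exact absurd h0 (by decide)
        · exact absurd h0 (by decide)
        · rw [nbr14] at hpa'
          rcases hpa' with rfl | rfl | rfl
          · exact Or.inr (Or.inr ⟨by simp, by simp⟩)
          · simp at hl'
          · simp at hl'
      · simp at hl
      · rcases adjU_decode hA h1 with ⟨-, h0 | h0⟩ | ⟨l', rfl, hpa', hl'⟩
        · exact absurd h0 (by decide)
        · exact absurd h0 (by decide)
        · rw [nbr17] at hpa'
          rcases hpa' with rfl | rfl <;> simp at hl'

end E

end Gadget
namespace Gadget

section Force

variable {α β γ : Type*} {m : ℕ} {T : Fin m → α × β × γ}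
variable {t : GadgetV α β γ m → Set (GadgetV α β γ m)}
variable (hG : Good T t)
include hG

/-- membership transport: if `p` lies in both triples, the triples coincide -/
lemma treq {x y p : GadgetV α β γ m} (hp1 : p ∈ t x) (hp2 : p ∈ t y) : t x = t y :=
  (hG.eq x p hp1).symm.trans (hG.eq y p hp2)

lemma memtr {x y p q : GadgetV α β γ m} (hp1 : p ∈ t x) (hp2 : p ∈ t y)
    (hq : q ∈ t x) : q ∈ t y := by rw [← treq hG hp1 hp2]; exact hq

/-- Lemma Y : a foreign gadget cannot give up its vertex 7 to the `v`-terminal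
while keeping 6 and 9. -/
lemma LY (j : Fin m) (hv7 : (g j 7 : GadgetV α β γ m) ∈ t (tV (T j).2.1))
    (h6 : (g j 6 : GadgetV α β γ m) ∉ t (tV (T j).2.1))
    (h9 : (g j 9 : GadgetV α β γ m) ∉ t (tV (T j).2.1)) : False := by
  rcases E9 hG j with ⟨-, h77⟩ | ⟨-, h77⟩ | ⟨-, h910⟩ | ⟨-, h910⟩
  · exact h9 (memtr hG h77 hv7 (hG.mem _))
  · exact h9 (memtr hG h77 hv7 (hG.mem _))
  all_goals rcases E6 hG j with ⟨-, h67⟩ | ⟨-, h610⟩ | ⟨h6v, -⟩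
  · exact h6 (memtr hG h67 hv7 (hG.mem _))
  · have h6in9 : (g j 6 : GadgetV α β γ m) ∈ t (g j 9) :=
      memtr hG h610 h910 (hG.mem _)
    have := uniqU hG h6in9 (hG.mem (g j 9)) (mem_U_g.mpr (by simp)) (mem_U_g.mpr (by simp))
    simp [g] at this
  · exact h6 (memtr hG h6v (hG.mem _) (hG.mem _))
  · exact h6 (memtr hG h67 hv7 (hG.mem _))
  · have h6in9 : (g j 6 : GadgetV α β γ m) ∈ t (g j 9) :=
      memtr hG h610 h910 (hG.mem _)
    have := uniqU hG h6in9 (hG.mem (g j 9)) (mem_U_g.mpr (by simp)) (mem_U_g.mpr (by simp))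
    simp [g] at this
  · exact h6 (memtr hG h6v (hG.mem _) (hG.mem _))

/-- Lemma X : the triple `{5,10,11}` is impossible. -/
lemma LX (i : Fin m) (h10 : (g i 10 : GadgetV α β γ m) ∈ t (g i 5))
    (h11 : (g i 11 : GadgetV α β γ m) ∈ t (g i 5)) : False := by
  have h97 : (g i 7 : GadgetV α β γ m) ∈ t (g i 9) := by
    rcases E9 hG i with ⟨-, h7⟩ | ⟨-, h7⟩ | ⟨-, h10'⟩ | ⟨-, h10'⟩
    · exact h7
    · exact h7
    all_goals
    · have h9in5 : (g i 9 : GadgetV α β γ m) ∈ t (g i 5) :=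
        memtr hG h10' h10 (hG.mem _)
      have := uniqU hG h9in5 (hG.mem (g i 5)) (mem_U_g.mpr (by simp)) (mem_U_g.mpr (by simp))
      exact absurd this (by simp [g])
  rcases E8 hG i with ⟨h86, h87⟩ | ⟨h86, h810⟩ | ⟨h89, h87⟩ | ⟨h89, h810⟩
  · -- t 9 = t 8 via 7: 9 and 6 clash in U
    have h9in8 : (g i 9 : GadgetV α β γ m) ∈ t (g i 8) :=
      memtr hG h97 h87 (hG.mem _)
    have := uniqU hG h9in8 h86 (mem_U_g.mpr (by simp)) (mem_U_g.mpr (by simp))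
    exact absurd this (by simp [g])
  · -- 10 ∈ t 8 and 10 ∈ t 5 : 8 and 11 clash in V
    have h8in5 : (g i 8 : GadgetV α β γ m) ∈ t (g i 5) :=
      memtr hG h810 h10 (hG.mem _)
    have := uniqV hG h8in5 h11 (mem_V_g.mpr (by simp)) (mem_V_g.mpr (by simp))
    exact absurd this (by simp [g])
  · -- the main case : t 8 ∋ 9, 7
    rcases E6 hG i with ⟨h68, -⟩ | ⟨h68, -⟩ | ⟨h6v, j, hj, h67⟩
    · have h6in8 : (g i 6 : GadgetV α β γ m) ∈ t (g i 8) :=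
        memtr hG h68 (hG.mem _) (hG.mem _)
      have := uniqU hG h6in8 h89 (mem_U_g.mpr (by simp)) (mem_U_g.mpr (by simp))
      exact absurd this (by simp [g])
    · have h6in8 : (g i 6 : GadgetV α β γ m) ∈ t (g i 8) :=
        memtr hG h68 (hG.mem _) (hG.mem _)
      have := uniqU hG h6in8 h89 (mem_U_g.mpr (by simp)) (mem_U_g.mpr (by simp))
      exact absurd this (by simp [g])
    · by_cases hji : j = i
      · subst hji
        have h6in8 : (g j 6 : GadgetV α β γ m) ∈ t (g j 8) :=
          memtr hG h67 h87 (hG.mem _)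
        have := uniqU hG h6in8 h89 (mem_U_g.mpr (by simp)) (mem_U_g.mpr (by simp))
        exact absurd this (by simp [g])
      · -- foreign gadget j dies
        have hveq : t (tV (T j).2.1) = t (g i 6) := by
          rw [hj]; exact hG.eq _ _ h6v
        refine LY hG j ?_ ?_ ?_
        · rw [hveq]; exact h67
        · rw [hveq]; intro hmem
          have := uniqU hG hmem (hG.mem (g i 6)) (mem_U_g.mpr (by simp))
            (mem_U_g.mpr (by simp))
          simp [g] at this
          exact hji this
        · rw [hveq]; intro hmem
          have := uniqU hG hmem (hG.mem (g i 6)) (mem_U_g.mpr (by simp))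
            (mem_U_g.mpr (by simp))
          simp [g] at this
  · have h8in5 : (g i 8 : GadgetV α β γ m) ∈ t (g i 5) :=
      memtr hG h810 h10 (hG.mem _)
    have := uniqV hG h8in5 h11 (mem_V_g.mpr (by simp)) (mem_V_g.mpr (by simp))
    exact absurd this (by simp [g])

/-- Lemma D : a gadget cannot lose only its vertex 1 to its `u`-terminal. -/
lemma LD (l : Fin m) {u : α} (hul : (T l).1 = u)
    (h1 : (g l 1 : GadgetV α β γ m) ∈ t (tU u))
    (h0 : (g l 0 : GadgetV α β γ m) ∉ t (tU u))
    (h3 : (g l 3 : GadgetV α β γ m) ∉ t (tU u)) : False := by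
  have htu : t (tU (T l).1) = t (tU u) := by rw [hul]
  rcases E0 hG l with ⟨h02, h01⟩ | ⟨h02, h04⟩ | ⟨h0u, -⟩
  · exact h0 (memtr hG h01 h1 (hG.mem _))
  · -- t 0 contains 2 and 4 ; now E3
    rcases E3 hG l with ⟨-, h31⟩ | ⟨-, h31⟩ | ⟨h32, -⟩ | ⟨h35, h34⟩
    · exact h3 (memtr hG h31 h1 (hG.mem _))
    · exact h3 (memtr hG h31 h1 (hG.mem _))
    · have h3in0 : (g l 3 : GadgetV α β γ m) ∈ t (g l 0) :=
        memtr hG h32 h02 (hG.mem _)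
      have := uniqV hG h3in0 (hG.mem (g l 0)) (mem_V_g.mpr (by simp)) (mem_V_g.mpr (by simp))
      exact absurd this (by simp [g])
    · have h3in0 : (g l 3 : GadgetV α β γ m) ∈ t (g l 0) :=
        memtr hG h34 h04 (hG.mem _)
      have := uniqV hG h3in0 (hG.mem (g l 0)) (mem_V_g.mpr (by simp)) (mem_V_g.mpr (by simp))
      exact absurd this (by simp [g])
  · exact h0 (memtr hG h0u (htu ▸ hG.mem (tU (T l).1)) (hG.mem _))

end Force

end Gadget
namespace Gadget

section Force2

variable {α β γ : Type*} {m : ℕ} {T : Fin m → α × β × γ}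
variable {t : GadgetV α β γ m → Set (GadgetV α β γ m)}
variable (hG : Good T t)
include hG

lemma LZ (i : Fin m) (h5 : (g i 5 : GadgetV α β γ m) ∈ t (g i 11))
    (h17 : (g i 17 : GadgetV α β γ m) ∈ t (g i 11)) :
    (g i 7 : GadgetV α β γ m) ∈ t (tV (T i).2.1) := by
  have hdis11 : ∀ (h11' : (g i 11 : GadgetV α β γ m) ∈ t (g i 10)), False := by
    intro h11'
    have h10in : (g i 10 : GadgetV α β γ m) ∈ t (g i 11) :=
      memtr hG h11' (hG.mem _) (hG.mem _)
    have := uniqW hG h10in h17 (mem_W_g.mpr (by simp)) (mem_W_g.mpr (by simp))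
    exact absurd this (by simp [g])
  rcases E10 hG i with ⟨h06, h08⟩ | ⟨-, h11'⟩ | ⟨h09, h08⟩ | ⟨-, h11'⟩
  · -- t 10 ∋ 6, 8
    rcases E9 hG i with ⟨h98, -⟩ | ⟨h9v, h97⟩ | ⟨h98, -⟩ | ⟨h911, -⟩
    · have h9in : (g i 9 : GadgetV α β γ m) ∈ t (g i 10) :=
        memtr hG h98 h08 (hG.mem _)
      have := uniqU hG h9in h06 (mem_U_g.mpr (by simp)) (mem_U_g.mpr (by simp))
      exact absurd this (by simp [g])
    · exact memtr hG h9v (hG.mem _) h97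
    · have h9in : (g i 9 : GadgetV α β γ m) ∈ t (g i 10) :=
        memtr hG h98 h08 (hG.mem _)
      have := uniqU hG h9in h06 (mem_U_g.mpr (by simp)) (mem_U_g.mpr (by simp))
      exact absurd this (by simp [g])
    · have h9in : (g i 9 : GadgetV α β γ m) ∈ t (g i 11) :=
        memtr hG h911 (hG.mem _) (hG.mem _)
      have := uniqU hG h9in h5 (mem_U_g.mpr (by simp)) (mem_U_g.mpr (by simp))
      exact absurd this (by simp [g])
  · exact absurd h11' hdis11
  · -- t 10 ∋ 9, 8
    rcases E6 hG i with ⟨h68, -⟩ | ⟨h68, -⟩ | ⟨h6v, j, hj, h67⟩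
    · have h6in : (g i 6 : GadgetV α β γ m) ∈ t (g i 10) :=
        memtr hG h68 h08 (hG.mem _)
      have := uniqU hG h6in h09 (mem_U_g.mpr (by simp)) (mem_U_g.mpr (by simp))
      exact absurd this (by simp [g])
    · have h6in : (g i 6 : GadgetV α β γ m) ∈ t (g i 10) :=
        memtr hG h68 h08 (hG.mem _)
      have := uniqU hG h6in h09 (mem_U_g.mpr (by simp)) (mem_U_g.mpr (by simp))
      exact absurd this (by simp [g])
    · by_cases hji : j = i
      · subst hji
        exact memtr hG h6v (hG.mem _) h67
      · have hveq : t (tV (T j).2.1) = t (g i 6) := by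
          rw [hj]; exact hG.eq _ _ h6v
        exfalso
        refine LY hG j ?_ ?_ ?_
        · rw [hveq]; exact h67
        · rw [hveq]; intro hmem
          have := uniqU hG hmem (hG.mem (g i 6)) (mem_U_g.mpr (by simp))
            (mem_U_g.mpr (by simp))
          simp [g] at this
          exact hji this
        · rw [hveq]; intro hmem
          have := uniqU hG hmem (hG.mem (g i 6)) (mem_U_g.mpr (by simp))
            (mem_U_g.mpr (by simp))
          simp [g] at this
  · exact absurd h11' hdis11

lemma LW (i : Fin m) (h5 : (g i 5 : GadgetV α β γ m) ∈ t (g i 17))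
    (h11 : (g i 11 : GadgetV α β γ m) ∈ t (g i 17)) :
    (g i 13 : GadgetV α β γ m) ∈ t (tW (T i).2.2) := by
  rcases E16 hG i with ⟨h1615, h1614⟩ | ⟨-, h17'⟩ | ⟨h1612, h1614⟩
  · -- t 16 ∋ 15, 14
    rcases E12 hG i with ⟨-, h1214⟩ | ⟨h1216, -⟩ | ⟨h12w, j, hj, h1213⟩
    · have h12in : (g i 12 : GadgetV α β γ m) ∈ t (g i 16) :=
        memtr hG h1214 h1614 (hG.mem _)
      have := uniqU hG h12in h1615 (mem_U_g.mpr (by simp)) (mem_U_g.mpr (by simp))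
      exact absurd this (by simp [g])
    · have h12in : (g i 12 : GadgetV α β γ m) ∈ t (g i 16) :=
        memtr hG h1216 (hG.mem _) (hG.mem _)
      have := uniqU hG h12in h1615 (mem_U_g.mpr (by simp)) (mem_U_g.mpr (by simp))
      exact absurd this (by simp [g])
    · by_cases hji : j = i
      · subst hji
        exact memtr hG h12w (hG.mem _) h1213
      · exfalso
        rcases E13 hG i with ⟨h1312, -⟩ | ⟨h1315, -⟩ | ⟨h1315, -⟩ | ⟨h13w, -⟩
        · have h13in : (g i 13 : GadgetV α β γ m) ∈ t (g i 12) :=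
            memtr hG h1312 (hG.mem _) (hG.mem _)
          have := uniqV hG h13in h1213 (mem_V_g.mpr (by simp)) (mem_V_g.mpr (by simp))
          simp [g] at this
          exact hji this.symm
        · have h13in : (g i 13 : GadgetV α β γ m) ∈ t (g i 16) :=
            memtr hG h1315 h1615 (hG.mem _)
          have := uniqV hG h13in (hG.mem (g i 16)) (mem_V_g.mpr (by simp))
            (mem_V_g.mpr (by simp))
          exact absurd this (by simp [g])
        · have h13in : (g i 13 : GadgetV α β γ m) ∈ t (g i 16) :=
            memtr hG h1315 h1615 (hG.mem _)
          have := uniqV hG h13in (hG.mem (g i 16)) (mem_V_g.mpr (by simp))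
            (mem_V_g.mpr (by simp))
          exact absurd this (by simp [g])
        · have h13in : (g i 13 : GadgetV α β γ m) ∈ t (g i 12) :=
            memtr hG h13w h12w (hG.mem _)
          have := uniqV hG h13in h1213 (mem_V_g.mpr (by simp)) (mem_V_g.mpr (by simp))
          simp [g] at this
          exact hji this.symm
  · -- 17 ∈ t 16 : then 16 ∈ t 17 clashes with 11 in V
    have h16in : (g i 16 : GadgetV α β γ m) ∈ t (g i 17) :=
      memtr hG h17' (hG.mem _) (hG.mem _)
    have := uniqV hG h16in h11 (mem_V_g.mpr (by simp)) (mem_V_g.mpr (by simp))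
    exact absurd this (by simp [g])
  · -- t 16 ∋ 12, 14
    rcases E15 hG i with ⟨-, h1514⟩ | ⟨h1513, h15w⟩ | ⟨h1516, -⟩ | ⟨h1516, -⟩
    · have h15in : (g i 15 : GadgetV α β γ m) ∈ t (g i 16) :=
        memtr hG h1514 h1614 (hG.mem _)
      have := uniqU hG h15in h1612 (mem_U_g.mpr (by simp)) (mem_U_g.mpr (by simp))
      exact absurd this (by simp [g])
    · exact memtr hG h15w (hG.mem _) h1513
    · have h15in : (g i 15 : GadgetV α β γ m) ∈ t (g i 16) :=
        memtr hG h1516 (hG.mem _) (hG.mem _)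
      have := uniqU hG h15in h1612 (mem_U_g.mpr (by simp)) (mem_U_g.mpr (by simp))
      exact absurd this (by simp [g])
    · have h15in : (g i 15 : GadgetV α β γ m) ∈ t (g i 16) :=
        memtr hG h1516 (hG.mem _) (hG.mem _)
      have := uniqU hG h15in h1612 (mem_U_g.mpr (by simp)) (mem_U_g.mpr (by simp))
      exact absurd this (by simp [g])

lemma LZW (i : Fin m) (h11 : (g i 11 : GadgetV α β γ m) ∈ t (g i 5))
    (h17 : (g i 17 : GadgetV α β γ m) ∈ t (g i 5)) :
    (g i 7 : GadgetV α β γ m) ∈ t (tV (T i).2.1) ∧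
    (g i 13 : GadgetV α β γ m) ∈ t (tW (T i).2.2) := by
  constructor
  · exact LZ hG i (memtr hG h11 (hG.mem _) (hG.mem _)) (memtr hG h11 (hG.mem _) h17)
  · exact LW hG i (memtr hG h17 (hG.mem _) (hG.mem _)) (memtr hG h17 (hG.mem _) h11)

end Force2

end Gadget
namespace Gadget

section Force3

variable {α β γ : Type*} {m : ℕ} {T : Fin m → α × β × γ}
variable {t : GadgetV α β γ m → Set (GadgetV α β γ m)}
variable (hG : Good T t)
include hG

/-- refined triple shape for a `u`-terminal -/
lemma triU (u : α) : ∃ b c, b ∈ Vbar α β γ m ∧ c ∈ Wbar α β γ m ∧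
    t (tU u) = {tU u, b, c} ∧
    ((gadgetGraph m T).Adj (tU u) b ∧ (gadgetGraph m T).Adj b c ∨
     (gadgetGraph m T).Adj (tU u) b ∧ (gadgetGraph m T).Adj (tU u) c ∨
     (gadgetGraph m T).Adj (tU u) c ∧ (gadgetGraph m T).Adj b c) := by
  obtain ⟨a, b, c, hA, hB, hC, hE, hTwo⟩ := hG.tri (tU u)
  have hx := hG.mem (tU u)
  rw [hE] at hx
  have ha : a = tU u := by
    rcases hx with h | h | h
    · exact h.symm
    · rw [← h] at hB
      rcases hB with ⟨v, hv⟩ | ⟨p, q, -, hv⟩ <;> simp [tU] at hv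
    · rw [← h] at hC
      rcases hC with ⟨w, hw⟩ | ⟨p, q, -, hw⟩ <;> simp [tU] at hw
  subst ha
  exact ⟨b, c, hB, hC, hE, hTwo⟩

/-- the u-terminal of every gadget is matched to vertex 0 or 1 of some gadget
with the same first coordinate -/
lemma FU (u : α) : ∃ j, (T j).1 = u ∧
    ((g j 0 : GadgetV α β γ m) ∈ t (tU u) ∨ (g j 1 : GadgetV α β γ m) ∈ t (tU u)) := by
  obtain ⟨b, c, hB, hC, hE, hTwo⟩ := triU hG u
  rcases hTwo with ⟨h1, -⟩ | ⟨h1, -⟩ | ⟨h1, -⟩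
  · obtain ⟨l, hl, rfl⟩ := adjV_tU hB h1.symm
    exact ⟨l, hl, Or.inl (by rw [hE]; simp)⟩
  · obtain ⟨l, hl, rfl⟩ := adjV_tU hB h1.symm
    exact ⟨l, hl, Or.inl (by rw [hE]; simp)⟩
  · obtain ⟨l, hl, rfl⟩ := adjW_tU hC h1.symm
    exact ⟨l, hl, Or.inr (by rw [hE]; simp)⟩

/-- branch I-a : the matched configuration -/
lemma LIa (i : Fin m) (h0 : (g i 0 : GadgetV α β γ m) ∈ t (tU (T i).1))
    (h1 : (g i 1 : GadgetV α β γ m) ∈ t (tU (T i).1)) :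
    (g i 7 : GadgetV α β γ m) ∈ t (tV (T i).2.1) ∧
    (g i 13 : GadgetV α β γ m) ∈ t (tW (T i).2.2) := by
  have hU : ∀ {k : Fin 18}, (g i k : GadgetV α β γ m) ∈ t (tU (T i).1) →
      (k = 2 ∨ k = 5 ∨ k = 6 ∨ k = 9 ∨ k = 12 ∨ k = 15) → False := by
    intro k hmem hk
    have := uniqU hG hmem (hG.mem (tU (T i).1)) (mem_U_g.mpr hk) mem_U_tU
    simp [g, tU] at this
  rcases E2 hG i with ⟨h20, -⟩ | ⟨h20, -⟩ | ⟨-, h21⟩ | ⟨h23, h24⟩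
  · exact absurd (memtr hG h20 h0 (hG.mem _)) (fun h => hU h (by simp))
  · exact absurd (memtr hG h20 h0 (hG.mem _)) (fun h => hU h (by simp))
  · exact absurd (memtr hG h21 h1 (hG.mem _)) (fun h => hU h (by simp))
  rcases E5 hG i with ⟨h53, -⟩ | ⟨-, h54⟩ | ⟨h511, h510⟩ | ⟨h511, h517⟩
  · have h5in : (g i 5 : GadgetV α β γ m) ∈ t (g i 2) :=
      memtr hG h53 h23 (hG.mem _)
    have := uniqU hG h5in (hG.mem (g i 2)) (mem_U_g.mpr (by simp)) (mem_U_g.mpr (by simp))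
    exact absurd this (by simp [g])
  · have h5in : (g i 5 : GadgetV α β γ m) ∈ t (g i 2) :=
      memtr hG h54 h24 (hG.mem _)
    have := uniqU hG h5in (hG.mem (g i 2)) (mem_U_g.mpr (by simp)) (mem_U_g.mpr (by simp))
    exact absurd this (by simp [g])
  · exact absurd h510 (fun h => LX hG i h h511)
  · exact LZW hG i h511 h517

/-- branch II : the matched configuration via {u,1,3} -/
lemma LII (i : Fin m) (h3 : (g i 3 : GadgetV α β γ m) ∈ t (tU (T i).1))
    (h1 : (g i 1 : GadgetV α β γ m) ∈ t (tU (T i).1)) :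
    (g i 7 : GadgetV α β γ m) ∈ t (tV (T i).2.1) ∧
    (g i 13 : GadgetV α β γ m) ∈ t (tW (T i).2.2) := by
  have hno0 : (g i 0 : GadgetV α β γ m) ∉ t (tU (T i).1) := by
    intro hmem
    have := uniqV hG hmem h3 (mem_V_g.mpr (by simp)) (mem_V_g.mpr (by simp))
    exact absurd this (by simp [g])
  rcases E0 hG i with ⟨h02, h01⟩ | ⟨h02, h04⟩ | ⟨h0u, -⟩
  · exact absurd (memtr hG h01 h1 (hG.mem _)) hno0
  · rcases E5 hG i with ⟨h53, -⟩ | ⟨-, h54⟩ | ⟨h511, h510⟩ | ⟨h511, h517⟩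
    · have h5in : (g i 5 : GadgetV α β γ m) ∈ t (tU (T i).1) :=
        memtr hG h53 h3 (hG.mem _)
      have := uniqU hG h5in (hG.mem (tU (T i).1)) (mem_U_g.mpr (by simp)) mem_U_tU
      simp [g, tU] at this
    · have h5in : (g i 5 : GadgetV α β γ m) ∈ t (g i 0) :=
        memtr hG h54 h04 (hG.mem _)
      have := uniqU hG h5in h02 (mem_U_g.mpr (by simp)) (mem_U_g.mpr (by simp))
      exact absurd this (by simp [g])
    · exact absurd h510 (fun h => LX hG i h h511)
    · exact LZW hG i h511 h517
  · exact absurd (memtr hG h0u (hG.mem _) (hG.mem _)) hno0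

/-- MAIN : a gadget whose u-terminal is matched to it absorbs its v and w terminals
through vertices 7 and 13 -/
lemma MAIN (i : Fin m)
    (hm : (g i 0 : GadgetV α β γ m) ∈ t (tU (T i).1) ∨
          (g i 1 : GadgetV α β γ m) ∈ t (tU (T i).1)) :
    (g i 7 : GadgetV α β γ m) ∈ t (tV (T i).2.1) ∧
    (g i 13 : GadgetV α β γ m) ∈ t (tW (T i).2.2) := by
  obtain ⟨b, c, hB, hC, hE, hTwo⟩ := triU hG (T i).1
  have hbmem : b ∈ t (tU (T i).1) := by rw [hE]; simp
  have hcmem : c ∈ t (tU (T i).1) := by rw [hE]; simp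
  rcases hm with h0 | h1
  · -- b = g i 0
    have hb : g i 0 = b := uniqV hG h0 hbmem (mem_V_g.mpr (by simp)) hB
    subst hb
    have hnoc : ¬ (gadgetGraph m T).Adj (g i 0) c := by
      intro h
      rcases adjW_decode hC h.symm with ⟨-, h' | h'⟩ | ⟨l, rfl, hpa, hl⟩
      · exact absurd h' (by decide)
      · exact absurd h' (by decide)
      · rw [nbr0] at hpa; subst hpa; simp at hl
    have hac : (gadgetGraph m T).Adj (tU (T i).1) c := by
      rcases hTwo with ⟨-, h2⟩ | ⟨-, h2⟩ | ⟨h1', -⟩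
      · exact absurd h2 hnoc
      · exact h2
      · exact h1'
    obtain ⟨l, hl, rfl⟩ := adjW_tU hC hac.symm
    by_cases hli : l = i
    · subst hli
      exact LIa hG l h0 hcmem
    · exfalso
      refine LD hG l hl hcmem ?_ ?_
      · intro hmem
        have := uniqV hG hmem h0 (mem_V_g.mpr (by simp)) (mem_V_g.mpr (by simp))
        simp [g] at this
        exact hli this
      · intro hmem
        have := uniqV hG hmem h0 (mem_V_g.mpr (by simp)) (mem_V_g.mpr (by simp))
        exact absurd this (by simp [g])
  · -- c = g i 1
    have hc : g i 1 = c := uniqW hG h1 hcmem (mem_W_g.mpr (by simp)) hC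
    subst hc
    rcases hTwo with ⟨h1', -⟩ | ⟨h1', -⟩ | ⟨-, h2'⟩
    · obtain ⟨l, hl, rfl⟩ := adjV_tU hB h1'.symm
      by_cases hli : l = i
      · subst hli
        exact LIa hG l hbmem h1
      · exfalso
        refine LD hG i rfl h1 ?_ ?_
        · intro hmem
          have := uniqV hG hmem hbmem (mem_V_g.mpr (by simp)) (mem_V_g.mpr (by simp))
          simp [g] at this
          exact hli this.symm
        · intro hmem
          have := uniqV hG hmem hbmem (mem_V_g.mpr (by simp)) (mem_V_g.mpr (by simp))
          exact absurd this (by simp [g])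
    · obtain ⟨l, hl, rfl⟩ := adjV_tU hB h1'.symm
      by_cases hli : l = i
      · subst hli
        exact LIa hG l hbmem h1
      · exfalso
        refine LD hG i rfl h1 ?_ ?_
        · intro hmem
          have := uniqV hG hmem hbmem (mem_V_g.mpr (by simp)) (mem_V_g.mpr (by simp))
          simp [g] at this
          exact hli this.symm
        · intro hmem
          have := uniqV hG hmem hbmem (mem_V_g.mpr (by simp)) (mem_V_g.mpr (by simp))
          exact absurd this (by simp [g])
    · rcases adjV_decode hB h2' with ⟨-, h' | h'⟩ | ⟨l, rfl, hpa, hl⟩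
      · exact absurd h' (by decide)
      · exact absurd h' (by decide)
      · rw [nbr1] at hpa
        rcases hpa with rfl | rfl
        · simp at hl
        · exact LII hG i hbmem h1

end Force3

end Gadget
namespace Gadget

lemma backward {α β γ : Type*} [Fintype α] [Fintype β] [Fintype γ] (n m : ℕ)
    (hα : Fintype.card α = n) (T : Fin m → α × β × γ)
    (P : Fin (n + 6 * m) → Set (GadgetV α β γ m))
    (hP1 : ∀ x, ∃! i, x ∈ P i)
    (hP2 : ∀ i, ∃ u ∈ Ubar α β γ m, ∃ v ∈ Vbar α β γ m, ∃ w ∈ Wbar α β γ m,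
      P i = {u, v, w} ∧ ((gadgetGraph m T).induce (P i)).Connected) :
    ∃ M : Finset (Fin m), M.card = n ∧
      ∀ i ∈ M, ∀ j ∈ M, i ≠ j →
        (T i).1 ≠ (T j).1 ∧ (T i).2.1 ≠ (T j).2.1 ∧ (T i).2.2 ≠ (T j).2.2 := by
  classical
  choose idx hmem huniq using hP1
  set t : GadgetV α β γ m → Set (GadgetV α β γ m) := fun x => P (idx x) with ht
  have hGood : Good T t := by
    refine ⟨fun x => hmem x, fun x y hy => congrArg P (huniq y (idx x) hy).symm, fun x => ?_⟩
    obtain ⟨u, hu, v, hv, w, hw, hPeq, hconn⟩ := hP2 (idx x)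
    refine ⟨u, v, w, hu, hv, hw, hPeq, ?_⟩
    rw [hPeq] at hconn
    exact twoEdges (fun h => U_V_disj (h ▸ hu) hv) (fun h => U_W_disj (h ▸ hu) hw)
      (fun h => V_W_disj (h ▸ hv) hw) hconn
  choose f hf1 hf2 using fun u => FU hGood u
  have hfinj : Function.Injective f := by
    intro a1 a2 h
    rw [← hf1 a1, ← hf1 a2, h]
  refine ⟨Finset.image f Finset.univ, ?_, ?_⟩
  · rw [Finset.card_image_of_injective _ hfinj, Finset.card_univ, hα]
  · intro i hi j hj hij
    obtain ⟨u, -, rfl⟩ := Finset.mem_image.mp hi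
    obtain ⟨u', -, rfl⟩ := Finset.mem_image.mp hj
    have h7i := MAIN hGood (f u) (by rw [hf1 u]; exact hf2 u)
    have h7j := MAIN hGood (f u') (by rw [hf1 u']; exact hf2 u')
    refine ⟨?_, ?_, ?_⟩
    · intro h
      rw [hf1 u, hf1 u'] at h
      exact hij (congrArg f h)
    · intro h
      have h7j' : (g (f u') 7 : GadgetV α β γ m) ∈ t (tV (T (f u)).2.1) := by
        rw [h]; exact h7j.1
      have := uniqW hGood h7i.1 h7j' (mem_W_g.mpr (by simp)) (mem_W_g.mpr (by simp))
      simp [g] at this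
      exact hij this
    · intro h
      have h13j' : (g (f u') 13 : GadgetV α β γ m) ∈ t (tW (T (f u)).2.2) := by
        rw [h]; exact h7j.2
      have := uniqV hGood h7i.2 h13j' (mem_V_g.mpr (by simp)) (mem_V_g.mpr (by simp))
      simp [g] at this
      exact hij this

end Gadget
namespace Gadget

variable {V : Type*} {G : SimpleGraph V}

lemma conn3_second {a b c : V} (h1 : G.Adj b a) (h2 : G.Adj b c) :
    (G.induce {a, b, c}).Connected := by
  have heq : ({a, b, c} : Set V) = {b, a, c} := by ext z; simp; tauto
  rw [heq]; exact conn3 h1 h2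

lemma conn3_third {a b c : V} (h1 : G.Adj c a) (h2 : G.Adj c b) :
    (G.induce {a, b, c}).Connected := by
  have heq : ({a, b, c} : Set V) = {c, a, b} := by ext z; simp; tauto
  rw [heq]; exact conn3 h1 h2

variable {α β γ : Type*} {m : ℕ}

def slotIdxA (j : Fin 18) : Fin 6 :=
  if j.val ≤ 1 then 0 else if j.val ≤ 4 then 1 else if j.val ≤ 7 then 2
  else if j.val ≤ 10 then 3 else if j.val ≤ 13 then 4 else 5

def slotIdxB (j : Fin 18) : Fin 6 := ⟨j.val / 3, by omega⟩

def Aslot (T : Fin m → α × β × γ) (i : Fin m) (k : Fin 6) : Set (GadgetV α β γ m) :=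
  if k.val = 0 then {tU (T i).1, g i 0, g i 1}
  else if k.val = 1 then {g i 2, g i 3, g i 4}
  else if k.val = 2 then {g i 6, tV (T i).2.1, g i 7}
  else if k.val = 3 then {g i 9, g i 8, g i 10}
  else if k.val = 4 then {g i 12, g i 13, tW (T i).2.2}
  else {g i 15, g i 16, g i 14}

def Bslot (i : Fin m) (k : Fin 6) : Set (GadgetV α β γ m) :=
  if k.val = 0 then {g i 2, g i 0, g i 1}
  else if k.val = 1 then {g i 5, g i 3, g i 4}
  else if k.val = 2 then {g i 6, g i 8, g i 7}
  else if k.val = 3 then {g i 9, g i 11, g i 10}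
  else if k.val = 4 then {g i 12, g i 13, g i 14}
  else {g i 15, g i 16, g i 17}

def Slot (T : Fin m → α × β × γ) (M : Finset (Fin m)) (σu : α → Fin m) :
    (α ⊕ Fin m × Fin 6) → Set (GadgetV α β γ m)
  | Sum.inl u => {g (σu u) 5, g (σu u) 11, g (σu u) 17}
  | Sum.inr (i, k) => if i ∈ M then Aslot T i k else Bslot i k

def slotOf (T : Fin m → α × β × γ) (M : Finset (Fin m)) (σu : α → Fin m)
    (σv : β → Fin m) (σw : γ → Fin m) : GadgetV α β γ m → α ⊕ Fin m × Fin 6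
  | Sum.inl (Sum.inl u) => Sum.inr (σu u, 0)
  | Sum.inl (Sum.inr (Sum.inl v)) => Sum.inr (σv v, 2)
  | Sum.inl (Sum.inr (Sum.inr w)) => Sum.inr (σw w, 4)
  | Sum.inr (i, j) =>
      if i ∈ M then
        (if j = 5 ∨ j = 11 ∨ j = 17 then Sum.inl (T i).1 else Sum.inr (i, slotIdxA j))
      else Sum.inr (i, slotIdxB j)

end Gadget
namespace Gadget

section Fwd

variable {α β γ : Type*} {m : ℕ}
variable {T : Fin m → α × β × γ} {M : Finset (Fin m)}
variable {σu : α → Fin m} {σv : β → Fin m} {σw : γ → Fin m}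
variable (hσuM : ∀ u, σu u ∈ M) (hσu1 : ∀ u, (T (σu u)).1 = u)
variable (hσuI : ∀ i ∈ M, σu ((T i).1) = i)
variable (hσvM : ∀ v, σv v ∈ M) (hσv1 : ∀ v, (T (σv v)).2.1 = v)
variable (hσvI : ∀ i ∈ M, σv ((T i).2.1) = i)
variable (hσwM : ∀ w, σw w ∈ M) (hσw1 : ∀ w, (T (σw w)).2.2 = w)
variable (hσwI : ∀ i ∈ M, σw ((T i).2.2) = i)

include hσuM hσu1 hσuI hσvM hσv1 hσvI hσwM hσw1 hσwI

lemma mem_self (x : GadgetV α β γ m) :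
    x ∈ Slot T M σu (slotOf T M σu σv σw x) := by
  match x with
  | Sum.inl (Sum.inl u) =>
    show _ ∈ Slot T M σu (Sum.inr (σu u, 0))
    simp [Slot, hσuM u, Aslot, hσu1 u, Fin.isValue, show ((0:Fin 6):ℕ)=0 from rfl, show ((1:Fin 6):ℕ)=1 from rfl, show ((2:Fin 6):ℕ)=2 from rfl, show ((3:Fin 6):ℕ)=3 from rfl, show ((4:Fin 6):ℕ)=4 from rfl, show ((5:Fin 6):ℕ)=5 from rfl]
  | Sum.inl (Sum.inr (Sum.inl v)) =>
    show _ ∈ Slot T M σu (Sum.inr (σv v, 2))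
    simp [Slot, hσvM v, Aslot, hσv1 v, Fin.isValue, show ((0:Fin 6):ℕ)=0 from rfl, show ((1:Fin 6):ℕ)=1 from rfl, show ((2:Fin 6):ℕ)=2 from rfl, show ((3:Fin 6):ℕ)=3 from rfl, show ((4:Fin 6):ℕ)=4 from rfl, show ((5:Fin 6):ℕ)=5 from rfl]
  | Sum.inl (Sum.inr (Sum.inr w)) =>
    show _ ∈ Slot T M σu (Sum.inr (σw w, 4))
    simp [Slot, hσwM w, Aslot, hσw1 w, Fin.isValue, show ((0:Fin 6):ℕ)=0 from rfl, show ((1:Fin 6):ℕ)=1 from rfl, show ((2:Fin 6):ℕ)=2 from rfl, show ((3:Fin 6):ℕ)=3 from rfl, show ((4:Fin 6):ℕ)=4 from rfl, show ((5:Fin 6):ℕ)=5 from rfl]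
  | Sum.inr (i, j) =>
    show _ ∈ Slot T M σu (if i ∈ M then _ else _)
    by_cases hM : i ∈ M
    · rw [if_pos hM]
      by_cases h5 : j = 5 ∨ j = 11 ∨ j = 17
      · rw [if_pos h5]
        rcases h5 with rfl | rfl | rfl <;> simp [Slot, hσuI i hM]
      · rw [if_neg h5]
        fin_cases j <;>
          first
          | (refine absurd ?_ h5; decide)
          | simp [Slot, hM, Aslot, slotIdxA, Fin.isValue, show ((0:Fin 6):ℕ)=0 from rfl, show ((1:Fin 6):ℕ)=1 from rfl, show ((2:Fin 6):ℕ)=2 from rfl, show ((3:Fin 6):ℕ)=3 from rfl, show ((4:Fin 6):ℕ)=4 from rfl, show ((5:Fin 6):ℕ)=5 from rfl]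
    · rw [if_neg hM]
      fin_cases j <;> simp [Slot, hM, Bslot, slotIdxB, Fin.isValue, show ((0:Fin 6):ℕ)=0 from rfl, show ((1:Fin 6):ℕ)=1 from rfl, show ((2:Fin 6):ℕ)=2 from rfl, show ((3:Fin 6):ℕ)=3 from rfl, show ((4:Fin 6):ℕ)=4 from rfl, show ((5:Fin 6):ℕ)=5 from rfl]

lemma eq_slotOf {x : GadgetV α β γ m} {s} (h : x ∈ Slot T M σu s) :
    s = slotOf T M σu σv σw x := by
  match s with
  | Sum.inl u =>
    simp only [Slot, Set.mem_insert_iff, Set.mem_singleton_iff] at h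
    rcases h with rfl | rfl | rfl <;>
    · simp only [slotOf]
      rw [if_pos (hσuM u), if_pos (by decide), hσu1 u]
  | Sum.inr (i, k) =>
    by_cases hM : i ∈ M
    · have hs : Slot T M σu (Sum.inr (i, k)) = Aslot T i k := by simp [Slot, hM]
      rw [hs] at h
      fin_cases k <;> simp only [Aslot] at h <;> norm_num at h <;>
        rcases h with rfl | rfl | rfl <;>
          (first
          | (simp only [slotOf]; rw [if_pos hM, if_neg (by decide)])
          | (simp only [slotOf]; rw [hσuI i hM])
          | (simp only [slotOf]; rw [hσvI i hM])
          | (simp only [slotOf]; rw [hσwI i hM])) <;>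
          exact rfl
    · have hs : Slot T M σu (Sum.inr (i, k)) = Bslot i k := by simp [Slot, hM]
      rw [hs] at h
      fin_cases k <;> simp only [Bslot] at h <;> norm_num at h <;>
        rcases h with rfl | rfl | rfl <;>
        · simp only [slotOf]
          rw [if_neg hM]
          try exact rfl

end Fwd

end Gadget
namespace Gadget

section Fwd3

variable {α β γ : Type*} {m : ℕ}
variable {T : Fin m → α × β × γ} {M : Finset (Fin m)} {σu : α → Fin m}

lemma slot_good (s : α ⊕ Fin m × Fin 6) :
    ∃ u ∈ Ubar α β γ m, ∃ v ∈ Vbar α β γ m, ∃ w ∈ Wbar α β γ m,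
      Slot T M σu s = {u, v, w} ∧
      ((gadgetGraph m T).induce (Slot T M σu s)).Connected := by
  match s with
  | Sum.inl u =>
    refine ⟨g (σu u) 5, mem_U_g.mpr (by simp), g (σu u) 11, mem_V_g.mpr (by simp),
      g (σu u) 17, mem_W_g.mpr (by simp), rfl, ?_⟩
    show ((gadgetGraph m T).induce {g (σu u) 5, g (σu u) 11, g (σu u) 17}).Connected
    exact conn3_second (adj_rr.mpr ⟨rfl, by decide⟩) (adj_rr.mpr ⟨rfl, by decide⟩)
  | Sum.inr (i, k) =>
    by_cases hM : i ∈ M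
    · have hs : Slot T M σu (Sum.inr (i, k)) = Aslot T i k := by simp [Slot, hM]
      rw [hs]
      fin_cases k
      · exact ⟨tU (T i).1, mem_U_tU, g i 0, mem_V_g.mpr (by simp), g i 1,
          mem_W_g.mpr (by simp), rfl,
          conn3 (adj_ur.mpr ⟨rfl, Or.inl rfl⟩) (adj_ur.mpr ⟨rfl, Or.inr rfl⟩)⟩
      · exact ⟨g i 2, mem_U_g.mpr (by simp), g i 3, mem_V_g.mpr (by simp), g i 4,
          mem_W_g.mpr (by simp), rfl,
          conn3_third (adj_rr.mpr ⟨rfl, by decide⟩) (adj_rr.mpr ⟨rfl, by decide⟩)⟩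
      · exact ⟨g i 6, mem_U_g.mpr (by simp), tV (T i).2.1, mem_V_tV, g i 7,
          mem_W_g.mpr (by simp), rfl,
          conn3_second (adj_vr.mpr ⟨rfl, Or.inl rfl⟩) (adj_vr.mpr ⟨rfl, Or.inr rfl⟩)⟩
      · exact ⟨g i 9, mem_U_g.mpr (by simp), g i 8, mem_V_g.mpr (by simp), g i 10,
          mem_W_g.mpr (by simp), rfl,
          conn3_third (adj_rr.mpr ⟨rfl, by decide⟩) (adj_rr.mpr ⟨rfl, by decide⟩)⟩
      · exact ⟨g i 12, mem_U_g.mpr (by simp), g i 13, mem_V_g.mpr (by simp),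
          tW (T i).2.2, mem_W_tW, rfl,
          conn3_third (adj_wr.mpr ⟨rfl, Or.inl rfl⟩) (adj_wr.mpr ⟨rfl, Or.inr rfl⟩)⟩
      · exact ⟨g i 15, mem_U_g.mpr (by simp), g i 16, mem_V_g.mpr (by simp), g i 14,
          mem_W_g.mpr (by simp), rfl,
          conn3_second (adj_rr.mpr ⟨rfl, by decide⟩) (adj_rr.mpr ⟨rfl, by decide⟩)⟩
    · have hs : Slot T M σu (Sum.inr (i, k)) = Bslot i k := by simp [Slot, hM]
      rw [hs]
      fin_cases k
      · exact ⟨g i 2, mem_U_g.mpr (by simp), g i 0, mem_V_g.mpr (by simp), g i 1,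
          mem_W_g.mpr (by simp), rfl,
          conn3 (adj_rr.mpr ⟨rfl, by decide⟩) (adj_rr.mpr ⟨rfl, by decide⟩)⟩
      · exact ⟨g i 5, mem_U_g.mpr (by simp), g i 3, mem_V_g.mpr (by simp), g i 4,
          mem_W_g.mpr (by simp), rfl,
          conn3_third (adj_rr.mpr ⟨rfl, by decide⟩) (adj_rr.mpr ⟨rfl, by decide⟩)⟩
      · exact ⟨g i 6, mem_U_g.mpr (by simp), g i 8, mem_V_g.mpr (by simp), g i 7,
          mem_W_g.mpr (by simp), rfl,
          conn3_second (adj_rr.mpr ⟨rfl, by decide⟩) (adj_rr.mpr ⟨rfl, by decide⟩)⟩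
      · exact ⟨g i 9, mem_U_g.mpr (by simp), g i 11, mem_V_g.mpr (by simp), g i 10,
          mem_W_g.mpr (by simp), rfl,
          conn3_third (adj_rr.mpr ⟨rfl, by decide⟩) (adj_rr.mpr ⟨rfl, by decide⟩)⟩
      · exact ⟨g i 12, mem_U_g.mpr (by simp), g i 13, mem_V_g.mpr (by simp), g i 14,
          mem_W_g.mpr (by simp), rfl,
          conn3_third (adj_rr.mpr ⟨rfl, by decide⟩) (adj_rr.mpr ⟨rfl, by decide⟩)⟩
      · exact ⟨g i 15, mem_U_g.mpr (by simp), g i 16, mem_V_g.mpr (by simp), g i 17,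
          mem_W_g.mpr (by simp), rfl,
          conn3_second (adj_rr.mpr ⟨rfl, by decide⟩) (adj_rr.mpr ⟨rfl, by decide⟩)⟩

end Fwd3

end Gadget
namespace Gadget

lemma forward {α β γ : Type*} [Fintype α] [Fintype β] [Fintype γ] (n m : ℕ)
    (hα : Fintype.card α = n) (hβ : Fintype.card β = n) (hγ : Fintype.card γ = n)
    (T : Fin m → α × β × γ) (M : Finset (Fin m)) (hMcard : M.card = n)
    (hMdisj : ∀ i ∈ M, ∀ j ∈ M, i ≠ j →
      (T i).1 ≠ (T j).1 ∧ (T i).2.1 ≠ (T j).2.1 ∧ (T i).2.2 ≠ (T j).2.2) :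
    ∃ P : Fin (n + 6 * m) → Set (GadgetV α β γ m),
      (∀ x, ∃! i, x ∈ P i) ∧
      ∀ i, ∃ u ∈ Ubar α β γ m, ∃ v ∈ Vbar α β γ m, ∃ w ∈ Wbar α β γ m,
        P i = {u, v, w} ∧ ((gadgetGraph m T).induce (P i)).Connected := by
  classical
  have h1 : ∀ u : α, ∃ i, i ∈ M ∧ (T i).1 = u := by
    have hinj : Set.InjOn (fun i => (T i).1) M := by
      intro i hi j hj hij
      by_contra hne
      exact (hMdisj i hi j hj hne).1 hij
    have himg : M.image (fun i => (T i).1) = Finset.univ :=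
      Finset.eq_univ_of_card _ (by
        rw [Finset.card_image_of_injOn hinj, hMcard, ← hα])
    intro u
    have := himg ▸ Finset.mem_univ u
    obtain ⟨i, hi, hTi⟩ := Finset.mem_image.mp this
    exact ⟨i, hi, hTi⟩
  have h2 : ∀ v : β, ∃ i, i ∈ M ∧ (T i).2.1 = v := by
    have hinj : Set.InjOn (fun i => (T i).2.1) M := by
      intro i hi j hj hij
      by_contra hne
      exact (hMdisj i hi j hj hne).2.1 hij
    have himg : M.image (fun i => (T i).2.1) = Finset.univ :=
      Finset.eq_univ_of_card _ (by
        rw [Finset.card_image_of_injOn hinj, hMcard, ← hβ])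
    intro v
    have := himg ▸ Finset.mem_univ v
    obtain ⟨i, hi, hTi⟩ := Finset.mem_image.mp this
    exact ⟨i, hi, hTi⟩
  have h3 : ∀ w : γ, ∃ i, i ∈ M ∧ (T i).2.2 = w := by
    have hinj : Set.InjOn (fun i => (T i).2.2) M := by
      intro i hi j hj hij
      by_contra hne
      exact (hMdisj i hi j hj hne).2.2 hij
    have himg : M.image (fun i => (T i).2.2) = Finset.univ :=
      Finset.eq_univ_of_card _ (by
        rw [Finset.card_image_of_injOn hinj, hMcard, ← hγ])
    intro w
    have := himg ▸ Finset.mem_univ w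
    obtain ⟨i, hi, hTi⟩ := Finset.mem_image.mp this
    exact ⟨i, hi, hTi⟩
  choose σu hσuM hσu1 using h1
  choose σv hσvM hσv1 using h2
  choose σw hσwM hσw1 using h3
  have hσuI : ∀ i ∈ M, σu ((T i).1) = i := by
    intro i hi
    by_contra hne
    exact (hMdisj _ (hσuM _) i hi hne).1 (hσu1 _)
  have hσvI : ∀ i ∈ M, σv ((T i).2.1) = i := by
    intro i hi
    by_contra hne
    exact (hMdisj _ (hσvM _) i hi hne).2.1 (hσv1 _)
  have hσwI : ∀ i ∈ M, σw ((T i).2.2) = i := by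
    intro i hi
    by_contra hne
    exact (hMdisj _ (hσwM _) i hi hne).2.2 (hσw1 _)
  have hcard : Fintype.card (α ⊕ Fin m × Fin 6) = n + 6 * m := by
    simp [hα]; ring
  let e : Fin (n + 6 * m) ≃ (α ⊕ Fin m × Fin 6) :=
    (Fintype.equivFinOfCardEq hcard).symm
  refine ⟨fun q => Slot T M σu (e q), ?_, ?_⟩
  · intro x
    refine ⟨e.symm (slotOf T M σu σv σw x), ?_, ?_⟩
    · show x ∈ Slot T M σu (e (e.symm _))
      rw [Equiv.apply_symm_apply]
      exact mem_self hσuM hσu1 hσuI hσvM hσv1 hσvI hσwM hσw1 hσwI x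
    · intro y hy
      have := eq_slotOf hσuM hσu1 hσuI hσvM hσv1 hσvI hσwM hσw1 hσwI hy
      rw [← this, Equiv.symm_apply_apply]
  · intro q
    exact slot_good (e q)

end Gadget
/-- The gadget graph admits a partition of its vertex set into `q = n + 6m` connected
transversal triples iff the 3-dimensional matching instance `T` has a perfect matching. -/
theorem stmt12 {α β γ : Type*} [Fintype α] [Fintype β] [Fintype γ]
    (n m : ℕ) (hα : Fintype.card α = n) (hβ : Fintype.card β = n)
    (hγ : Fintype.card γ = n) (T : Fin m → α × β × γ) :
    (∃ P : Fin (n + 6 * m) → Set (GadgetV α β γ m),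
        (∀ x, ∃! i, x ∈ P i) ∧
        ∀ i, ∃ u ∈ Ubar α β γ m, ∃ v ∈ Vbar α β γ m, ∃ w ∈ Wbar α β γ m,
          P i = {u, v, w} ∧ ((gadgetGraph m T).induce (P i)).Connected) ↔
    (∃ M : Finset (Fin m), M.card = n ∧
        ∀ i ∈ M, ∀ j ∈ M, i ≠ j →
          (T i).1 ≠ (T j).1 ∧ (T i).2.1 ≠ (T j).2.1 ∧ (T i).2.2 ≠ (T j).2.2) := by
  constructor
  · rintro ⟨P, hP1, hP2⟩
    exact Gadget.backward n m hα T P hP1 hP2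
  · rintro ⟨M, hMcard, hMdisj⟩
    exact Gadget.forward n m hα hβ hγ T M hMcard hMdisj
end
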